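/- arXiv:1612.02848 — 9 statements merged into one kernel-verified Lean document; each statement's English description precedes it below -/
import Mathlib

section
/- Let u₁, u₂ ∈ [0,1]. Then ∫₀¹ 1_{(1-u₁, ∞)}(t) · 1_{[0, u₂)}(t) dt = max(u₁ + u₂ − 1, 0). (This is the paper's Proposition that the bivariate one-factor copula with inner copula Π, first linking copula the lower Fréchet–Hoeffding bound W(u₁,u₀) = max(u₁+u₀−1,0) — whose partial derivative in u₀ is the indicator of t > 1−u₁ — and second linking copula the upper bound min(u₂,u₀), equals the lower Fréchet–Hoeffding bound W(u₁,u₂) = max(u₁+u₂−1,0).) -/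
open MeasureTheory

/-- The bivariate one-factor copula with inner copula the independence copula,
first linking copula the lower Fréchet–Hoeffding bound `W(u₁,t) = max (u₁+t-1) 0`
(whose partial derivative in `t` is the indicator of `(1-u₁, ∞)`) and second
linking copula the upper bound `min u₂ t` (whose partial derivative in `t` is
the indicator of `[0,u₂)`) equals the lower Fréchet–Hoeffding bound
`W(u₁,u₂) = max (u₁+u₂-1) 0`. -/
theorem ofc_lower_frechet (u₁ u₂ : ℝ) (hu₁ : u₁ ∈ Set.Icc (0:ℝ) 1)
    (hu₂ : u₂ ∈ Set.Icc (0:ℝ) 1) :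
    ∫ t in (0:ℝ)..1,
        (Set.Ioi (1 - u₁)).indicator (fun _ => (1:ℝ)) t *
          (Set.Ico (0:ℝ) u₂).indicator (fun _ => (1:ℝ)) t
      = max (u₁ + u₂ - 1) 0 := by
  obtain ⟨h10, h11⟩ := hu₁
  obtain ⟨h20, h21⟩ := hu₂
  have hpos : (0:ℝ) ≤ 1 - u₁ := by linarith
  have hfun : ∀ t : ℝ, (Set.Ioi (1 - u₁)).indicator (fun _ => (1:ℝ)) t *
      (Set.Ico (0:ℝ) u₂).indicator (fun _ => (1:ℝ)) t
      = (Set.Ioo (1-u₁) u₂).indicator (fun _ => (1:ℝ)) t := by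
    intro t
    simp only [Set.indicator_apply, Set.mem_Ioi, Set.mem_Ico, Set.mem_Ioo]
    by_cases h1 : 1 - u₁ < t
    · by_cases h2 : t < u₂
      · rw [if_pos h1, if_pos ⟨le_of_lt (lt_of_le_of_lt hpos h1), h2⟩, if_pos ⟨h1, h2⟩, mul_one]
      · rw [if_pos h1, if_neg (fun h => h2 h.2), if_neg (fun h => h2 h.2), mul_zero]
    · rw [if_neg h1, zero_mul, if_neg (fun h => h1 h.1)]
  simp only [hfun]
  rw [intervalIntegral.integral_of_le (by norm_num : (0:ℝ) ≤ 1),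
    setIntegral_indicator measurableSet_Ioo]
  have hinter : Set.Ioc (0:ℝ) 1 ∩ Set.Ioo (1-u₁) u₂ = Set.Ioo (1-u₁) u₂ := by
    apply Set.inter_eq_right.mpr
    intro t ht
    exact ⟨lt_of_le_of_lt hpos ht.1, le_of_lt (lt_of_lt_of_le ht.2 h21)⟩
  rw [hinter, setIntegral_const, measureReal_def, Real.volume_Ioo, smul_eq_mul, mul_one]
  rcases le_or_gt u₂ (1 - u₁) with h | h
  · rw [ENNReal.ofReal_eq_zero.mpr (by linarith)]
    simp
    linarith
  · rw [ENNReal.toReal_ofReal (by linarith)]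
    rw [max_eq_left (by linarith)]
    ring
end

section
/- Let u₁, u₂ ∈ [0,1]. Let h₁, h₂ : ℝ → ℝ satisfy h_i(0) = 0, h_i(1) = u_i; h₁ is twice continuously differentiable on [0,1]; h₂ is continuously differentiable on [0,1]; and 0 ≤ h_i′(t) ≤ 1 for all t ∈ [0,1]. Let G : ℝ × ℝ × ℝ → ℝ be continuous on [0,1]³ with G(t,a,b) ≥ a·b for all t, a, b ∈ [0,1]. If either (h₂(t) ≤ u₂·t for all t ∈ [0,1] and h₁″(t) ≥ 0 for all t ∈ [0,1]) or (h₂(t) ≥ u₂·t for all t ∈ [0,1] and h₁″(t) ≤ 0 for all t ∈ [0,1]), then ∫₀¹ G(t, h₁′(t), h₂′(t)) dt ≥ u₁·u₂. (This is the paper's Proposition: if the inner copula of a bivariate extended one-factor copula is PQD for every factor value, and C₂ is NQD while C₁ is SD(U₁|U₀), or C₂ is PQD while C₁ is SI(U₁|U₀), then the outer copula is PQD.) -/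
open MeasureTheory

/-- If the inner copula of a bivariate extended one-factor copula is PQD for every factor
value (`G t a b ≥ a b`), and `C₂` is NQD while `C₁` is SD(U₁|U₀), or `C₂` is PQD while
`C₁` is SI(U₁|U₀), then the outer copula is PQD:
`∫₀¹ G(t, h₁'(t), h₂'(t)) dt ≥ u₁ u₂`. -/
theorem eofc_pqd (u₁ u₂ : ℝ) (hu₁ : u₁ ∈ Set.Icc (0:ℝ) 1) (hu₂ : u₂ ∈ Set.Icc (0:ℝ) 1)
    (h₁ h₂ h₁' h₁'' h₂' : ℝ → ℝ)
    (h₁0 : h₁ 0 = 0) (h₁1 : h₁ 1 = u₁) (h₂0 : h₂ 0 = 0) (h₂1 : h₂ 1 = u₂)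
    (hd₁ : ∀ t ∈ Set.Icc (0:ℝ) 1, HasDerivAt h₁ (h₁' t) t)
    (hd₁' : ∀ t ∈ Set.Icc (0:ℝ) 1, HasDerivAt h₁' (h₁'' t) t)
    (hc₁'' : ContinuousOn h₁'' (Set.Icc 0 1))
    (hd₂ : ∀ t ∈ Set.Icc (0:ℝ) 1, HasDerivAt h₂ (h₂' t) t)
    (hc₂' : ContinuousOn h₂' (Set.Icc 0 1))
    (hb₁ : ∀ t ∈ Set.Icc (0:ℝ) 1, h₁' t ∈ Set.Icc (0:ℝ) 1)
    (hb₂ : ∀ t ∈ Set.Icc (0:ℝ) 1, h₂' t ∈ Set.Icc (0:ℝ) 1)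
    (G : ℝ → ℝ → ℝ → ℝ)
    (hGc : ContinuousOn (fun p : ℝ × ℝ × ℝ => G p.1 p.2.1 p.2.2)
      (Set.Icc 0 1 ×ˢ Set.Icc 0 1 ×ˢ Set.Icc 0 1))
    (hG : ∀ t ∈ Set.Icc (0:ℝ) 1, ∀ a ∈ Set.Icc (0:ℝ) 1, ∀ b ∈ Set.Icc (0:ℝ) 1,
      a * b ≤ G t a b)
    (hcase :
      ((∀ t ∈ Set.Icc (0:ℝ) 1, h₂ t ≤ u₂ * t) ∧ (∀ t ∈ Set.Icc (0:ℝ) 1, 0 ≤ h₁'' t)) ∨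
      ((∀ t ∈ Set.Icc (0:ℝ) 1, u₂ * t ≤ h₂ t) ∧ (∀ t ∈ Set.Icc (0:ℝ) 1, h₁'' t ≤ 0))) :
    u₁ * u₂ ≤ ∫ t in (0:ℝ)..1, G t (h₁' t) (h₂' t) := by
  have hI : Set.uIcc (0:ℝ) 1 = Set.Icc 0 1 := Set.uIcc_of_le zero_le_one
  have hc₁' : ContinuousOn h₁' (Set.Icc (0:ℝ) 1) := fun t ht =>
    (hd₁' t ht).continuousAt.continuousWithinAt
  have hc₂ : ContinuousOn h₂ (Set.Icc (0:ℝ) 1) := fun t ht =>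
    (hd₂ t ht).continuousAt.continuousWithinAt
  -- integrability of the pieces
  have intA : IntervalIntegrable (fun t => h₁'' t * (h₂ t - u₂ * t)) volume 0 1 := by
    apply ContinuousOn.intervalIntegrable
    rw [hI]
    exact hc₁''.mul (hc₂.sub (continuousOn_const.mul continuousOn_id))
  have intB : IntervalIntegrable (fun t => h₁' t * (h₂' t - u₂)) volume 0 1 := by
    apply ContinuousOn.intervalIntegrable
    rw [hI]
    exact hc₁'.mul (hc₂'.sub continuousOn_const)
  have int₁' : IntervalIntegrable h₁' volume 0 1 := by
    apply ContinuousOn.intervalIntegrable; rw [hI]; exact hc₁'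
  have intP : IntervalIntegrable (fun t => h₁' t * h₂' t) volume 0 1 := by
    apply ContinuousOn.intervalIntegrable; rw [hI]; exact hc₁'.mul hc₂'
  have intG : IntervalIntegrable (fun t => G t (h₁' t) (h₂' t)) volume 0 1 := by
    apply ContinuousOn.intervalIntegrable
    rw [hI]
    exact hGc.comp (f := fun t => (t, h₁' t, h₂' t)) (continuousOn_id.prodMk (hc₁'.prodMk hc₂'))
      (fun t ht => ⟨ht, hb₁ t ht, hb₂ t ht⟩)
  -- ∫ h₁' = u₁
  have hint₁ : (∫ t in (0:ℝ)..1, h₁' t) = u₁ := by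
    rw [intervalIntegral.integral_eq_sub_of_hasDerivAt (fun t ht => hd₁ t (hI ▸ ht)) int₁',
      h₁1, h₁0, sub_zero]
  -- integration by parts identity
  have hFB : (∫ t in (0:ℝ)..1, (h₁'' t * (h₂ t - u₂ * t) + h₁' t * (h₂' t - u₂))) = 0 := by
    have key : ∀ t ∈ Set.uIcc (0:ℝ) 1, HasDerivAt (fun s => h₁' s * (h₂ s - u₂ * s))
        (h₁'' t * (h₂ t - u₂ * t) + h₁' t * (h₂' t - u₂)) t := by
      intro t ht
      rw [hI] at ht
      have := (hd₁' t ht).mul ((hd₂ t ht).sub ((hasDerivAt_id t).const_mul u₂))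
      exact this.congr_deriv (by simp)
    rw [intervalIntegral.integral_eq_sub_of_hasDerivAt key (intA.add intB)]
    simp [h₂0, h₂1]
  have hsum : (∫ t in (0:ℝ)..1, h₁'' t * (h₂ t - u₂ * t))
      + (∫ t in (0:ℝ)..1, h₁' t * (h₂' t - u₂)) = 0 := by
    rw [← intervalIntegral.integral_add intA intB]; exact hFB
  -- the sign of ∫ h₁''(h₂ - u₂ t)
  have hAle : (∫ t in (0:ℝ)..1, h₁'' t * (h₂ t - u₂ * t)) ≤ 0 := by
    have h0 : ∀ t ∈ Set.Icc (0:ℝ) 1, h₁'' t * (h₂ t - u₂ * t) ≤ 0 := by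
      rcases hcase with ⟨hn, hp⟩ | ⟨hp, hn⟩
      · exact fun t ht => mul_nonpos_of_nonneg_of_nonpos (hp t ht) (sub_nonpos.2 (hn t ht))
      · exact fun t ht => mul_nonpos_of_nonpos_of_nonneg (hn t ht) (sub_nonneg.2 (hp t ht))
    calc (∫ t in (0:ℝ)..1, h₁'' t * (h₂ t - u₂ * t))
        ≤ ∫ t in (0:ℝ)..1, (0:ℝ) := by
          apply intervalIntegral.integral_mono_on zero_le_one intA
            intervalIntegrable_const h0
      _ = 0 := by simp
  have hBge : 0 ≤ ∫ t in (0:ℝ)..1, h₁' t * (h₂' t - u₂) := by linarith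
  -- combine
  have hmain : u₁ * u₂ ≤ ∫ t in (0:ℝ)..1, h₁' t * h₂' t := by
    have : (∫ t in (0:ℝ)..1, h₁' t * h₂' t)
        = (∫ t in (0:ℝ)..1, h₁' t * (h₂' t - u₂)) + u₂ * ∫ t in (0:ℝ)..1, h₁' t := by
      rw [← intervalIntegral.integral_const_mul, ← intervalIntegral.integral_add intB
        (int₁'.const_mul u₂)]
      congr 1; ext t; ring
    rw [this, hint₁]
    linarith
  refine hmain.trans (intervalIntegral.integral_mono_on zero_le_one intP intG ?_)
  exact fun t ht => hG t ht _ (hb₁ t ht) _ (hb₂ t ht)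
end

section
/- Let u₁, u₂ ∈ [0,1]. Let h₁, h₂ : ℝ → ℝ satisfy h_i(0) = 0, h_i(1) = u_i; h₁ is twice continuously differentiable on [0,1]; h₂ is continuously differentiable on [0,1]; and 0 ≤ h_i′(t) ≤ 1 for all t ∈ [0,1]. Let G : ℝ × ℝ × ℝ → ℝ be continuous on [0,1]³ with G(t,a,b) ≤ a·b for all t, a, b ∈ [0,1]. If either (h₂(t) ≤ u₂·t for all t ∈ [0,1] and h₁″(t) ≤ 0 for all t ∈ [0,1]) or (h₂(t) ≥ u₂·t for all t ∈ [0,1] and h₁″(t) ≥ 0 for all t ∈ [0,1]), then ∫₀¹ G(t, h₁′(t), h₂′(t)) dt ≤ u₁·u₂. (This is the paper's Proposition: if the inner copula of a bivariate extended one-factor copula is NQD for every factor value, and C₂ is NQD while C₁ is SI(U₁|U₀), or C₂ is PQD while C₁ is SD(U₁|U₀), then the outer copula is NQD.) -/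
open MeasureTheory

/-- If the inner copula of a bivariate extended one-factor copula is NQD for every factor
value (`G t a b ≤ a b`), and `C₂` is NQD while `C₁` is SI(U₁|U₀), or `C₂` is PQD while
`C₁` is SD(U₁|U₀), then the outer copula is NQD:
`∫₀¹ G(t, h₁'(t), h₂'(t)) dt ≤ u₁ u₂`. -/
theorem eofc_nqd (u₁ u₂ : ℝ) (hu₁ : u₁ ∈ Set.Icc (0:ℝ) 1) (hu₂ : u₂ ∈ Set.Icc (0:ℝ) 1)
    (h₁ h₂ h₁' h₁'' h₂' : ℝ → ℝ)
    (h₁0 : h₁ 0 = 0) (h₁1 : h₁ 1 = u₁) (h₂0 : h₂ 0 = 0) (h₂1 : h₂ 1 = u₂)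
    (hd₁ : ∀ t ∈ Set.Icc (0:ℝ) 1, HasDerivAt h₁ (h₁' t) t)
    (hd₁' : ∀ t ∈ Set.Icc (0:ℝ) 1, HasDerivAt h₁' (h₁'' t) t)
    (hc₁'' : ContinuousOn h₁'' (Set.Icc 0 1))
    (hd₂ : ∀ t ∈ Set.Icc (0:ℝ) 1, HasDerivAt h₂ (h₂' t) t)
    (hc₂' : ContinuousOn h₂' (Set.Icc 0 1))
    (hb₁ : ∀ t ∈ Set.Icc (0:ℝ) 1, h₁' t ∈ Set.Icc (0:ℝ) 1)
    (hb₂ : ∀ t ∈ Set.Icc (0:ℝ) 1, h₂' t ∈ Set.Icc (0:ℝ) 1)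
    (G : ℝ → ℝ → ℝ → ℝ)
    (hGc : ContinuousOn (fun p : ℝ × ℝ × ℝ => G p.1 p.2.1 p.2.2)
      (Set.Icc 0 1 ×ˢ Set.Icc 0 1 ×ˢ Set.Icc 0 1))
    (hG : ∀ t ∈ Set.Icc (0:ℝ) 1, ∀ a ∈ Set.Icc (0:ℝ) 1, ∀ b ∈ Set.Icc (0:ℝ) 1,
      G t a b ≤ a * b)
    (hcase :
      ((∀ t ∈ Set.Icc (0:ℝ) 1, h₂ t ≤ u₂ * t) ∧ (∀ t ∈ Set.Icc (0:ℝ) 1, h₁'' t ≤ 0)) ∨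
      ((∀ t ∈ Set.Icc (0:ℝ) 1, u₂ * t ≤ h₂ t) ∧ (∀ t ∈ Set.Icc (0:ℝ) 1, 0 ≤ h₁'' t))) :
    (∫ t in (0:ℝ)..1, G t (h₁' t) (h₂' t)) ≤ u₁ * u₂ := by
  have h01 : (0:ℝ) ≤ 1 := zero_le_one
  have hIcc : Set.uIcc (0:ℝ) 1 = Set.Icc 0 1 := Set.uIcc_of_le h01
  have hc₁' : ContinuousOn h₁' (Set.Icc 0 1) := fun t ht =>
    ((hd₁' t ht).continuousAt).continuousWithinAt
  have hc₂ : ContinuousOn h₂ (Set.Icc 0 1) := fun t ht =>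
    ((hd₂ t ht).continuousAt).continuousWithinAt
  have hintG : IntervalIntegrable (fun t => G t (h₁' t) (h₂' t)) volume 0 1 := by
    apply ContinuousOn.intervalIntegrable_of_Icc h01
    apply hGc.comp (continuousOn_id.prodMk (hc₁'.prodMk hc₂'))
    intro t ht
    exact ⟨ht, hb₁ t ht, hb₂ t ht⟩
  have hint12 : IntervalIntegrable (fun t => h₁' t * h₂' t) volume 0 1 :=
    (hc₁'.mul hc₂').intervalIntegrable_of_Icc h01
  have step1 : (∫ t in (0:ℝ)..1, G t (h₁' t) (h₂' t)) ≤ ∫ t in (0:ℝ)..1, h₁' t * h₂' t := by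
    apply intervalIntegral.integral_mono_on h01 hintG hint12
    intro t ht
    exact hG t ht _ (hb₁ t ht) _ (hb₂ t ht)
  have hi1'' : IntervalIntegrable h₁'' volume 0 1 := hc₁''.intervalIntegrable_of_Icc h01
  have hi2' : IntervalIntegrable h₂' volume 0 1 := hc₂'.intervalIntegrable_of_Icc h01
  have hi1' : IntervalIntegrable h₁' volume 0 1 := hc₁'.intervalIntegrable_of_Icc h01
  have ibp1 : (∫ t in (0:ℝ)..1, h₁' t * h₂' t)
      = h₁' 1 * u₂ - ∫ t in (0:ℝ)..1, h₁'' t * h₂ t := by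
    have := intervalIntegral.integral_mul_deriv_eq_deriv_mul
      (u := h₁') (v := h₂) (u' := h₁'') (v' := h₂')
      (fun x hx => hd₁' x (hIcc ▸ hx)) (fun x hx => hd₂ x (hIcc ▸ hx)) hi1'' hi2'
    rw [this, h₂0, h₂1]; ring
  have ibp2 : (∫ t in (0:ℝ)..1, t * h₁'' t) = h₁' 1 - u₁ := by
    have hftc : (∫ t in (0:ℝ)..1, h₁' t) = u₁ := by
      rw [intervalIntegral.integral_eq_sub_of_hasDerivAt
        (fun x hx => hd₁ x (hIcc ▸ hx)) hi1', h₁1, h₁0, sub_zero]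
    have := intervalIntegral.integral_mul_deriv_eq_deriv_mul
      (u := fun t => t) (v := h₁') (u' := fun _ => (1:ℝ)) (v' := h₁'')
      (fun x _ => hasDerivAt_id x) (fun x hx => hd₁' x (hIcc ▸ hx))
      intervalIntegrable_const hi1''
    simp only [one_mul] at this
    rw [this, hftc]; ring
  have key : (∫ t in (0:ℝ)..1, u₂ * (t * h₁'' t)) ≤ ∫ t in (0:ℝ)..1, h₁'' t * h₂ t := by
    apply intervalIntegral.integral_mono_on h01
      ((continuousOn_const.mul ((continuousOn_id.mul hc₁''))).intervalIntegrable_of_Icc h01)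
      ((hc₁''.mul hc₂).intervalIntegrable_of_Icc h01)
    intro t ht
    simp only [Pi.mul_apply, id_eq]
    rw [show u₂ * (t * h₁'' t) = h₁'' t * (u₂ * t) by ring]
    rcases hcase with ⟨hA, hB⟩ | ⟨hA, hB⟩
    · exact mul_le_mul_of_nonpos_left (hA t ht) (hB t ht)
    · exact mul_le_mul_of_nonneg_left (hA t ht) (hB t ht)
  have keq : (∫ t in (0:ℝ)..1, u₂ * (t * h₁'' t)) = u₂ * (h₁' 1 - u₁) := by
    rw [intervalIntegral.integral_const_mul, ibp2]
  rw [keq] at key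
  linarith [step1, ibp1, key]
end

section
/- Let u₁, u₂ ∈ [0,1]. Let h₁, h₂ : ℝ → ℝ satisfy h_i(0) = 0, h_i(1) = u_i; h₁ is twice continuously differentiable on [0,1] with h₁″(t) ≤ 0 for all t ∈ [0,1]; h₂ is continuously differentiable on [0,1]; and 0 ≤ h_i′(t) ≤ 1 for all t ∈ [0,1]. Then: (i) if h₂(t) ≥ u₂·t for all t ∈ [0,1], then ∫₀¹ h₁′(t)·h₂′(t) dt ≥ u₁·u₂; and (ii) if h₂(t) ≤ u₂·t for all t ∈ [0,1], then ∫₀¹ h₁′(t)·h₂′(t) dt ≤ u₁·u₂. (This is the paper's Corollary: for a bivariate one-factor copula with inner copula equal to the independence copula Π, if C₂ is PQD and C₁ is SI(U₁|U₀) the outer copula is PQD, while if C₂ is NQD and C₁ is SI(U₁|U₀) the outer copula is NQD.) -/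
open MeasureTheory

/-- Corollary: for a bivariate one-factor copula with inner copula the independence
copula, if `C₂` is PQD and `C₁` is SI(U₁|U₀) the outer copula is PQD, while if `C₂` is
NQD and `C₁` is SI(U₁|U₀) the outer copula is NQD. -/
theorem ofc_pqd_nqd_corollary (u₁ u₂ : ℝ)
    (hu₁ : u₁ ∈ Set.Icc (0:ℝ) 1) (hu₂ : u₂ ∈ Set.Icc (0:ℝ) 1)
    (h₁ h₂ h₁' h₁'' h₂' : ℝ → ℝ)
    (h₁0 : h₁ 0 = 0) (h₁1 : h₁ 1 = u₁) (h₂0 : h₂ 0 = 0) (h₂1 : h₂ 1 = u₂)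
    (hd₁ : ∀ t ∈ Set.Icc (0:ℝ) 1, HasDerivAt h₁ (h₁' t) t)
    (hd₁' : ∀ t ∈ Set.Icc (0:ℝ) 1, HasDerivAt h₁' (h₁'' t) t)
    (hc₁'' : ContinuousOn h₁'' (Set.Icc 0 1))
    (hSI : ∀ t ∈ Set.Icc (0:ℝ) 1, h₁'' t ≤ 0)
    (hd₂ : ∀ t ∈ Set.Icc (0:ℝ) 1, HasDerivAt h₂ (h₂' t) t)
    (hc₂' : ContinuousOn h₂' (Set.Icc 0 1))
    (hb₁ : ∀ t ∈ Set.Icc (0:ℝ) 1, h₁' t ∈ Set.Icc (0:ℝ) 1)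
    (hb₂ : ∀ t ∈ Set.Icc (0:ℝ) 1, h₂' t ∈ Set.Icc (0:ℝ) 1) :
    ((∀ t ∈ Set.Icc (0:ℝ) 1, u₂ * t ≤ h₂ t) →
        u₁ * u₂ ≤ ∫ t in (0:ℝ)..1, h₁' t * h₂' t) ∧
    ((∀ t ∈ Set.Icc (0:ℝ) 1, h₂ t ≤ u₂ * t) →
        (∫ t in (0:ℝ)..1, h₁' t * h₂' t) ≤ u₁ * u₂) := by
  have huIcc : Set.uIcc (0:ℝ) 1 = Set.Icc 0 1 := Set.uIcc_of_le zero_le_one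
  set g : ℝ → ℝ := fun t => h₂ t - u₂ * t with hg_def
  have hdg : ∀ t ∈ Set.Icc (0:ℝ) 1, HasDerivAt g (h₂' t - u₂) t := by
    intro t ht
    rw [hg_def]; exact ((hd₂ t ht).sub ((hasDerivAt_id t).const_mul u₂)).congr_deriv (by ring)
  have hc₁' : ContinuousOn h₁' (Set.Icc 0 1) :=
    fun t ht => (hd₁' t ht).continuousAt.continuousWithinAt
  have hcg : ContinuousOn g (Set.Icc 0 1) :=
    fun t ht => (hdg t ht).continuousAt.continuousWithinAt
  have hg0 : g 0 = 0 := by simp [hg_def, h₂0]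
  have hg1 : g 1 = 0 := by simp [hg_def, h₂1]
  -- interval integrabilities
  have hi₁' : IntervalIntegrable h₁' volume 0 1 :=
    (hc₁'.mono (by rw [huIcc])).intervalIntegrable
  have hi₂' : IntervalIntegrable h₂' volume 0 1 :=
    (hc₂'.mono (by rw [huIcc])).intervalIntegrable
  have higd : IntervalIntegrable (fun t => h₂' t - u₂) volume 0 1 :=
    hi₂'.sub (intervalIntegrable_const)
  have hi₁'' : IntervalIntegrable h₁'' volume 0 1 :=
    (hc₁''.mono (by rw [huIcc])).intervalIntegrable
  have hiprod : IntervalIntegrable (fun t => h₁' t * h₂' t) volume 0 1 :=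
    ((hc₁'.mul hc₂').mono (by rw [huIcc])).intervalIntegrable
  have hi12g : IntervalIntegrable (fun t => h₁'' t * g t) volume 0 1 :=
    ((hc₁''.mul hcg).mono (by rw [huIcc])).intervalIntegrable
  -- ∫ h₁' = u₁
  have hint₁ : (∫ t in (0:ℝ)..1, h₁' t) = u₁ := by
    rw [intervalIntegral.integral_eq_sub_of_hasDerivAt
      (fun t ht => hd₁ t (huIcc ▸ ht)) hi₁', h₁1, h₁0, sub_zero]
  -- integration by parts
  have hibp : (∫ t in (0:ℝ)..1, h₁' t * (h₂' t - u₂))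
      = -∫ t in (0:ℝ)..1, h₁'' t * g t := by
    have := intervalIntegral.integral_mul_deriv_eq_deriv_mul
      (u := h₁') (u' := h₁'') (v := g) (v' := fun t => h₂' t - u₂)
      (fun t ht => hd₁' t (huIcc ▸ ht)) (fun t ht => hdg t (huIcc ▸ ht))
      hi₁'' higd
    rw [this, hg0, hg1]
    ring
  have hsplit : (∫ t in (0:ℝ)..1, h₁' t * (h₂' t - u₂))
      = (∫ t in (0:ℝ)..1, h₁' t * h₂' t) - u₁ * u₂ := by
    have : (∫ t in (0:ℝ)..1, h₁' t * (h₂' t - u₂))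
        = (∫ t in (0:ℝ)..1, h₁' t * h₂' t) - ∫ t in (0:ℝ)..1, h₁' t * u₂ := by
      rw [← intervalIntegral.integral_sub hiprod (hi₁'.mul_const u₂)]
      congr 1; ext t; ring
    rw [this, intervalIntegral.integral_mul_const, hint₁]
  have key : (∫ t in (0:ℝ)..1, h₁' t * h₂' t)
      = u₁ * u₂ - ∫ t in (0:ℝ)..1, h₁'' t * g t := by
    linarith
  constructor
  · intro hPQD
    have hnp : (∫ t in (0:ℝ)..1, h₁'' t * g t) ≤ 0 := by
      have : (0:ℝ) ≤ ∫ t in (0:ℝ)..1, -(h₁'' t * g t) := by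
        apply intervalIntegral.integral_nonneg zero_le_one
        intro t ht
        have := hSI t ht
        have hg : 0 ≤ g t := sub_nonneg.mpr (hPQD t ht)
        nlinarith
      rw [intervalIntegral.integral_neg] at this
      linarith
    rw [key]; linarith
  · intro hNQD
    have hnn : (0:ℝ) ≤ ∫ t in (0:ℝ)..1, h₁'' t * g t := by
      apply intervalIntegral.integral_nonneg zero_le_one
      intro t ht
      have := hSI t ht
      have hg : g t ≤ 0 := sub_nonpos.mpr (hNQD t ht)
      nlinarith
    rw [key]; linarith
end

section
/- Let u₁, u₂ ∈ [0,1]. For i ∈ {1,2} and j ∈ {1,2}, let C_{ij} : ℝ × ℝ → ℝ be jointly continuous on [0,1]² together with its second-variable partial derivatives up to order two, and suppose that for every v ∈ [0,1]: C_{ij}(v,0) = 0, C_{ij}(v,1) = v, and 0 ≤ ∂₂C_{ij}(v,t) ≤ 1 for all t ∈ [0,1]. Assume C_{1j} is SD in its second variable (∂²₂C_{1j}(v,t) ≥ 0 for all v,t ∈ [0,1]) and C_{2j} is NQD (C_{2j}(v,t) ≤ v·t for all v,t ∈ [0,1]), for j = 1 and j = 2. Let G : ℝ³ → ℝ be continuous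 on [0,1]³ with G(t,a,b) ≥ a·b for all t,a,b ∈ [0,1]. Then ∫₀¹ ∫₀¹ G(t₂, ∂₂C_{12}(∂₂C_{11}(u₁,t₁), t₂), ∂₂C_{22}(∂₂C_{21}(u₂,t₁), t₂)) dt₂ dt₁ ≥ u₁·u₂. (This is the paper's Proposition that a bivariate nested extended one-factor copula with two layers whose inner copula is PQD, with C_{2j} NQD and C_{1j} SD with respect to the j-th factor for each layer j, is PQD.) -/
open MeasureTheory

open Set intervalIntegral

/-- One-layer key lemma: if `F' = f`, `f' = f'`, `H' = h`, with `F 0 = 0`, `F 1 = v₁`,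
`H 0 = 0`, `H 1 = v₂`, `f' ≥ 0` (SD) and `H t ≤ v₂ t` (NQD), then
`∫₀¹ f t * h t dt ≥ v₁ v₂`. -/
lemma key_layer (v₁ v₂ : ℝ) (F f f' H h : ℝ → ℝ)
    (hF : ∀ t ∈ Set.uIcc (0:ℝ) 1, HasDerivAt F (f t) t)
    (hf : ∀ t ∈ Set.uIcc (0:ℝ) 1, HasDerivAt f (f' t) t)
    (hH : ∀ t ∈ Set.uIcc (0:ℝ) 1, HasDerivAt H (h t) t)
    (hfc : ContinuousOn f (Set.uIcc 0 1)) (hf'c : ContinuousOn f' (Set.uIcc 0 1))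
    (hhc : ContinuousOn h (Set.uIcc 0 1)) (hHc : ContinuousOn H (Set.uIcc 0 1))
    (hF0 : F 0 = 0) (hF1 : F 1 = v₁) (hH0 : H 0 = 0) (hH1 : H 1 = v₂)
    (hf'pos : ∀ t ∈ Set.Icc (0:ℝ) 1, 0 ≤ f' t)
    (hHle : ∀ t ∈ Set.Icc (0:ℝ) 1, H t ≤ v₂ * t) :
    v₁ * v₂ ≤ ∫ t in (0:ℝ)..1, f t * h t := by
  have hicc : Set.uIcc (0:ℝ) 1 = Set.Icc 0 1 := Set.uIcc_of_le zero_le_one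
  have hint_f : IntervalIntegrable f volume 0 1 := by
    rw [intervalIntegrable_iff_integrableOn_Icc_of_le zero_le_one]
    exact (hicc ▸ hfc).integrableOn_compact isCompact_Icc
  have hint_f' : IntervalIntegrable f' volume 0 1 := by
    rw [intervalIntegrable_iff_integrableOn_Icc_of_le zero_le_one]
    exact (hicc ▸ hf'c).integrableOn_compact isCompact_Icc
  have hint_h : IntervalIntegrable h volume 0 1 := by
    rw [intervalIntegrable_iff_integrableOn_Icc_of_le zero_le_one]
    exact (hicc ▸ hhc).integrableOn_compact isCompact_Icc
  -- IBP 1 : ∫ f h = f 1 * H 1 - f 0 * H 0 - ∫ f' H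
  have ibp1 : ∫ t in (0:ℝ)..1, f t * h t
      = f 1 * H 1 - f 0 * H 0 - ∫ t in (0:ℝ)..1, f' t * H t :=
    integral_mul_deriv_eq_deriv_mul hf hH hint_f' hint_h
  -- IBP 2 : ∫ t * f' t = f 1 - ∫ f
  have ibp2 : ∫ t in (0:ℝ)..1, t * f' t
      = 1 * f 1 - 0 * f 0 - ∫ t in (0:ℝ)..1, 1 * f t :=
    integral_mul_deriv_eq_deriv_mul (u := fun t => t) (u' := fun _ => (1:ℝ))
      (fun t _ => hasDerivAt_id t) hf intervalIntegrable_const hint_f'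
  have hintF : ∫ t in (0:ℝ)..1, f t = v₁ := by
    rw [integral_eq_sub_of_hasDerivAt hF hint_f, hF0, hF1, sub_zero]
  -- monotonicity: ∫ f' H ≤ ∫ f' (v₂ t)
  have hmono : ∫ t in (0:ℝ)..1, f' t * H t ≤ ∫ t in (0:ℝ)..1, f' t * (v₂ * t) := by
    apply intervalIntegral.integral_mono_on zero_le_one
    · rw [intervalIntegrable_iff_integrableOn_Icc_of_le zero_le_one]
      exact ((hicc ▸ hf'c).mul (hicc ▸ hHc)).integrableOn_compact isCompact_Icc
    · rw [intervalIntegrable_iff_integrableOn_Icc_of_le zero_le_one]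
      exact ((hicc ▸ hf'c).mul (continuousOn_const.mul continuousOn_id)).integrableOn_compact
        isCompact_Icc
    · intro t ht
      exact mul_le_mul_of_nonneg_left (hHle t ht) (hf'pos t ht)
  have hconst : ∫ t in (0:ℝ)..1, f' t * (v₂ * t) = v₂ * ∫ t in (0:ℝ)..1, t * f' t := by
    rw [← intervalIntegral.integral_const_mul]
    apply intervalIntegral.integral_congr
    intro t _
    ring
  have h1 : ∫ t in (0:ℝ)..1, 1 * f t = v₁ := by simpa using hintF
  rw [ibp1, hH0, hH1]
  have : ∫ t in (0:ℝ)..1, f' t * H t ≤ v₂ * (f 1 - v₁) := by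
    rw [← sub_zero (f 1)]
    calc ∫ t in (0:ℝ)..1, f' t * H t ≤ v₂ * ∫ t in (0:ℝ)..1, t * f' t := by
          rw [← hconst]; exact hmono
      _ = v₂ * (f 1 - 0 - v₁) := by rw [ibp2, h1]; ring_nf
      _ = v₂ * (f 1 - 0 - v₁) := rfl
  nlinarith [this]
open Set intervalIntegral

lemma slice_cont {f : ℝ → ℝ → ℝ}
    (hf : ContinuousOn (fun p : ℝ × ℝ => f p.1 p.2) (Set.Icc 0 1 ×ˢ Set.Icc 0 1))
    {v : ℝ} (hv : v ∈ Set.Icc (0:ℝ) 1) : ContinuousOn (f v) (Set.Icc 0 1) := by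
  have : ContinuousOn (fun t : ℝ => (v, t)) (Set.Icc 0 1) :=
    (continuous_const.prodMk continuous_id).continuousOn
  exact hf.comp this (fun t ht => ⟨hv, ht⟩)


/-- A bivariate nested extended one-factor copula with two layers whose inner copula is
PQD for every factor value (`G t a b ≥ a b`), with `C_{1j}` SD in its second variable
and `C_{2j}` NQD for each layer `j`, is PQD. Here `C i j`, `D i j` and `D2 i j` are the
linking copula of variable `i` at layer `j`, its second-variable partial derivative,
and its second second-variable partial derivative. -/
theorem neofc_two_layers_pqd (u₁ u₂ : ℝ)
    (hu₁ : u₁ ∈ Set.Icc (0:ℝ) 1) (hu₂ : u₂ ∈ Set.Icc (0:ℝ) 1)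
    (C D D2 : Fin 2 → Fin 2 → ℝ → ℝ → ℝ)
    (hCc : ∀ i j, ContinuousOn (fun p : ℝ × ℝ => C i j p.1 p.2)
      (Set.Icc 0 1 ×ˢ Set.Icc 0 1))
    (hDc : ∀ i j, ContinuousOn (fun p : ℝ × ℝ => D i j p.1 p.2)
      (Set.Icc 0 1 ×ˢ Set.Icc 0 1))
    (hD2c : ∀ i j, ContinuousOn (fun p : ℝ × ℝ => D2 i j p.1 p.2)
      (Set.Icc 0 1 ×ˢ Set.Icc 0 1))
    (hder : ∀ i j, ∀ v ∈ Set.Icc (0:ℝ) 1, ∀ t ∈ Set.Icc (0:ℝ) 1,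
      HasDerivAt (fun s => C i j v s) (D i j v t) t)
    (hder2 : ∀ i j, ∀ v ∈ Set.Icc (0:ℝ) 1, ∀ t ∈ Set.Icc (0:ℝ) 1,
      HasDerivAt (fun s => D i j v s) (D2 i j v t) t)
    (hC0 : ∀ i j, ∀ v ∈ Set.Icc (0:ℝ) 1, C i j v 0 = 0)
    (hC1 : ∀ i j, ∀ v ∈ Set.Icc (0:ℝ) 1, C i j v 1 = v)
    (hDb : ∀ i j, ∀ v ∈ Set.Icc (0:ℝ) 1, ∀ t ∈ Set.Icc (0:ℝ) 1,
      D i j v t ∈ Set.Icc (0:ℝ) 1)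
    (hSD : ∀ j, ∀ v ∈ Set.Icc (0:ℝ) 1, ∀ t ∈ Set.Icc (0:ℝ) 1, 0 ≤ D2 0 j v t)
    (hNQD : ∀ j, ∀ v ∈ Set.Icc (0:ℝ) 1, ∀ t ∈ Set.Icc (0:ℝ) 1, C 1 j v t ≤ v * t)
    (G : ℝ → ℝ → ℝ → ℝ)
    (hGc : ContinuousOn (fun p : ℝ × ℝ × ℝ => G p.1 p.2.1 p.2.2)
      (Set.Icc 0 1 ×ˢ Set.Icc 0 1 ×ˢ Set.Icc 0 1))
    (hG : ∀ t ∈ Set.Icc (0:ℝ) 1, ∀ a ∈ Set.Icc (0:ℝ) 1, ∀ b ∈ Set.Icc (0:ℝ) 1,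
      a * b ≤ G t a b) :
    u₁ * u₂ ≤ ∫ t₁ in (0:ℝ)..1, ∫ t₂ in (0:ℝ)..1,
      G t₂ (D 0 1 (D 0 0 u₁ t₁) t₂) (D 1 1 (D 1 0 u₂ t₁) t₂) := by
  have hicc : Set.uIcc (0:ℝ) 1 = Set.Icc 0 1 := Set.uIcc_of_le zero_le_one
  -- clamp
  set c : ℝ → ℝ := fun t => min 1 (max 0 t) with hc_def
  have hc : Continuous c := continuous_const.min (continuous_const.max continuous_id)
  have hcm : ∀ t, c t ∈ Set.Icc (0:ℝ) 1 := fun t =>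
    ⟨le_min zero_le_one (le_max_left 0 t), min_le_left _ _⟩
  have hcid : ∀ t ∈ Set.Icc (0:ℝ) 1, c t = t := by
    intro t ht
    simp only [hc_def, max_eq_right ht.1, min_eq_right ht.2]
  -- the key one-layer lemma, specialized
  have key : ∀ v₁ ∈ Set.Icc (0:ℝ) 1, ∀ v₂ ∈ Set.Icc (0:ℝ) 1, ∀ j,
      v₁ * v₂ ≤ ∫ t in (0:ℝ)..1, D 0 j v₁ t * D 1 j v₂ t := by
    intro v₁ hv₁ v₂ hv₂ j
    refine key_layer v₁ v₂ (C 0 j v₁) (D 0 j v₁) (D2 0 j v₁) (C 1 j v₂) (D 1 j v₂)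
      (fun t ht => hder 0 j v₁ hv₁ t (hicc ▸ ht))
      (fun t ht => hder2 0 j v₁ hv₁ t (hicc ▸ ht))
      (fun t ht => hder 1 j v₂ hv₂ t (hicc ▸ ht))
      (hicc ▸ slice_cont (hDc 0 j) hv₁) (hicc ▸ slice_cont (hD2c 0 j) hv₁)
      (hicc ▸ slice_cont (hDc 1 j) hv₂) (hicc ▸ slice_cont (hCc 1 j) hv₂)
      (hC0 0 j v₁ hv₁) (hC1 0 j v₁ hv₁) (hC0 1 j v₂ hv₂) (hC1 1 j v₂ hv₂)
      (fun t ht => hSD j v₁ hv₁ t ht) (fun t ht => hNQD j v₂ hv₂ t ht)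
  -- the clamped integrand
  set Φ : ℝ → ℝ → ℝ := fun x t₂ =>
    G (c t₂) (D 0 1 (D 0 0 u₁ (c x)) (c t₂)) (D 1 1 (D 1 0 u₂ (c x)) (c t₂)) with hΦ_def
  have hΦc : Continuous (Function.uncurry Φ) := by
    have h1 : Continuous fun p : ℝ × ℝ => D 0 0 u₁ (c p.1) :=
      (hDc 0 0).comp_continuous (continuous_const.prodMk (hc.comp continuous_fst))
        (fun p => ⟨hu₁, hcm _⟩)
    have h2 : Continuous fun p : ℝ × ℝ => D 1 0 u₂ (c p.1) :=
      (hDc 1 0).comp_continuous (continuous_const.prodMk (hc.comp continuous_fst))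
        (fun p => ⟨hu₂, hcm _⟩)
    have h3 : Continuous fun p : ℝ × ℝ => D 0 1 (D 0 0 u₁ (c p.1)) (c p.2) :=
      (hDc 0 1).comp_continuous (h1.prodMk (hc.comp continuous_snd))
        (fun p => ⟨hDb 0 0 u₁ hu₁ _ (hcm _), hcm _⟩)
    have h4 : Continuous fun p : ℝ × ℝ => D 1 1 (D 1 0 u₂ (c p.1)) (c p.2) :=
      (hDc 1 1).comp_continuous (h2.prodMk (hc.comp continuous_snd))
        (fun p => ⟨hDb 1 0 u₂ hu₂ _ (hcm _), hcm _⟩)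
    exact hGc.comp_continuous
      ((hc.comp continuous_snd).prodMk (h3.prodMk h4))
      (fun p => ⟨hcm _, hDb 0 1 _ (hDb 0 0 u₁ hu₁ _ (hcm _)) _ (hcm _),
        hDb 1 1 _ (hDb 1 0 u₂ hu₂ _ (hcm _)) _ (hcm _)⟩)
  set I : ℝ → ℝ := fun x => ∫ t₂ in (0:ℝ)..1, Φ x t₂ with hI_def
  have hIc : Continuous I :=
    intervalIntegral.continuous_parametric_intervalIntegral_of_continuous' hΦc 0 1
  -- inner integral equals I on [0,1], and is bounded below
  have hinner_eq : ∀ t₁ ∈ Set.Icc (0:ℝ) 1,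
      (∫ t₂ in (0:ℝ)..1, G t₂ (D 0 1 (D 0 0 u₁ t₁) t₂) (D 1 1 (D 1 0 u₂ t₁) t₂)) = I t₁ := by
    intro t₁ ht₁
    apply intervalIntegral.integral_congr
    intro t₂ ht₂
    simp only [hΦ_def, hcid t₁ ht₁, hcid t₂ (hicc ▸ ht₂)]
  have hinner_ge : ∀ t₁ ∈ Set.Icc (0:ℝ) 1, D 0 0 u₁ t₁ * D 1 0 u₂ t₁ ≤ I t₁ := by
    intro t₁ ht₁
    rw [← hinner_eq t₁ ht₁]
    have hv₁ : D 0 0 u₁ t₁ ∈ Set.Icc (0:ℝ) 1 := hDb 0 0 u₁ hu₁ t₁ ht₁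
    have hv₂ : D 1 0 u₂ t₁ ∈ Set.Icc (0:ℝ) 1 := hDb 1 0 u₂ hu₂ t₁ ht₁
    calc D 0 0 u₁ t₁ * D 1 0 u₂ t₁
        ≤ ∫ t₂ in (0:ℝ)..1, D 0 1 (D 0 0 u₁ t₁) t₂ * D 1 1 (D 1 0 u₂ t₁) t₂ :=
          key _ hv₁ _ hv₂ 1
      _ ≤ ∫ t₂ in (0:ℝ)..1,
            G t₂ (D 0 1 (D 0 0 u₁ t₁) t₂) (D 1 1 (D 1 0 u₂ t₁) t₂) := by
          apply intervalIntegral.integral_mono_on zero_le_one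
          · rw [intervalIntegrable_iff_integrableOn_Icc_of_le zero_le_one]
            exact ((slice_cont (hDc 0 1) hv₁).mul
              (slice_cont (hDc 1 1) hv₂)).integrableOn_compact isCompact_Icc
          · rw [intervalIntegrable_iff_integrableOn_Icc_of_le zero_le_one]
            have : ContinuousOn (fun t₂ : ℝ =>
                G t₂ (D 0 1 (D 0 0 u₁ t₁) t₂) (D 1 1 (D 1 0 u₂ t₁) t₂)) (Set.Icc 0 1) := by
              refine hGc.comp (ContinuousOn.prodMk continuousOn_id
                (ContinuousOn.prodMk (slice_cont (hDc 0 1) hv₁)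
                  (slice_cont (hDc 1 1) hv₂))) ?_
              intro t₂ ht₂
              exact ⟨ht₂, hDb 0 1 _ hv₁ _ ht₂, hDb 1 1 _ hv₂ _ ht₂⟩
            exact this.integrableOn_compact isCompact_Icc
          · intro t₂ ht₂
            exact hG t₂ ht₂ _ (hDb 0 1 _ hv₁ _ ht₂) _ (hDb 1 1 _ hv₂ _ ht₂)
  -- assemble
  have houter : (∫ t₁ in (0:ℝ)..1, ∫ t₂ in (0:ℝ)..1,
      G t₂ (D 0 1 (D 0 0 u₁ t₁) t₂) (D 1 1 (D 1 0 u₂ t₁) t₂)) = ∫ t₁ in (0:ℝ)..1, I t₁ :=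
    intervalIntegral.integral_congr (fun t₁ ht₁ => hinner_eq t₁ (hicc ▸ ht₁))
  rw [houter]
  calc u₁ * u₂ ≤ ∫ t₁ in (0:ℝ)..1, D 0 0 u₁ t₁ * D 1 0 u₂ t₁ := key _ hu₁ _ hu₂ 0
    _ ≤ ∫ t₁ in (0:ℝ)..1, I t₁ := by
        apply intervalIntegral.integral_mono_on zero_le_one
        · rw [intervalIntegrable_iff_integrableOn_Icc_of_le zero_le_one]
          exact ((slice_cont (hDc 0 0) hu₁).mul
            (slice_cont (hDc 1 0) hu₂)).integrableOn_compact isCompact_Icc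
        · exact hIc.intervalIntegrable 0 1
        · exact hinner_ge
end

section
/- Let w ≥ 1 and u₁, u₂ ∈ [0,1]. For i ∈ {1,2} and j ∈ {1,…,w}, let C_{ij} : ℝ × ℝ → ℝ be jointly continuous on [0,1]² together with its second-variable partial derivatives up to order two, and suppose that for every v ∈ [0,1]: C_{ij}(v,0) = 0, C_{ij}(v,1) = v, and 0 ≤ ∂₂C_{ij}(v,t) ≤ 1 for all t ∈ [0,1]. Assume that for each j, either (C_{1j}(v,t) ≤ v·t for all v,t ∈ [0,1] and ∂²₂C_{2j}(v,t) ≥ 0 for all v,t ∈ [0,1]) or (C_{2j}(v,t) ≤ v·t for all v,t ∈ [0,1] and ∂²₂C_{1j}(v,t) ≥ 0 for all v,t ∈ [0,1]). Let G : ℝ³ → ℝ be continuous on [0,1]³ with G(t,a,b) ≥ a·b for all t,a,b ∈ [0,1]. Define, for t = (t₁,…,t_w) ∈ [0,1]^w, G_i(t) as the iterated composition obtained by starting from u_i and successively applying v ↦ ∂₂C_{ij}(v, t_j) for j = 1,…,w. Then ∫_{[0,1]^w} G(t_w, G₁(t), G₂(t)) dt ≥ u₁·u₂. (This is the paper's Proposition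 that a bivariate nested extended one-factor copula with w layers whose inner copula is PQD, with at each layer j one linking copula NQD and the other SD with respect to the factor T_j, is PQD.) -/
open MeasureTheory

section Aux

/-- Section continuity helper. -/
lemma neofc_sectionCont {f : ℝ → ℝ → ℝ}
    (hf : ContinuousOn (fun p : ℝ × ℝ => f p.1 p.2) (Set.Icc 0 1 ×ˢ Set.Icc 0 1))
    {a : ℝ} (ha : a ∈ Set.Icc (0:ℝ) 1) :
    ContinuousOn (fun t => f a t) (Set.Icc 0 1) := by
  have h : ContinuousOn ((fun p : ℝ × ℝ => f p.1 p.2) ∘ fun t : ℝ => (a, t)) (Set.Icc 0 1) :=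
    hf.comp ((continuous_const.prodMk continuous_id).continuousOn)
      (fun t ht => ⟨ha, ht⟩)
  exact h

/-- Iterated composition stays in `[0,1]`. -/
lemma neofc_fold_mem : ∀ (n : ℕ) (F : Fin n → ℝ → ℝ → ℝ),
    (∀ j, ∀ x ∈ Set.Icc (0:ℝ) 1, ∀ s ∈ Set.Icc (0:ℝ) 1, F j x s ∈ Set.Icc (0:ℝ) 1) →
    ∀ a ∈ Set.Icc (0:ℝ) 1, ∀ (t : Fin n → ℝ), (∀ j, t j ∈ Set.Icc (0:ℝ) 1) →
    Fin.foldl n (fun x j => F j x (t j)) a ∈ Set.Icc (0:ℝ) 1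
  | 0, F, hF, a, ha, t, ht => by simpa using ha
  | n+1, F, hF, a, ha, t, ht => by
    rw [Fin.foldl_succ]
    exact neofc_fold_mem n (fun j => F j.succ) (fun j => hF j.succ) _
      (hF 0 a ha (t 0) (ht 0)) (fun j => t j.succ) (fun j => ht j.succ)

/-- Iterated composition is continuous in the factor values. -/
lemma neofc_fold_contOn : ∀ (n : ℕ) (F : Fin n → ℝ → ℝ → ℝ),
    (∀ j, ∀ x ∈ Set.Icc (0:ℝ) 1, ∀ s ∈ Set.Icc (0:ℝ) 1, F j x s ∈ Set.Icc (0:ℝ) 1) →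
    (∀ j, ContinuousOn (fun p : ℝ × ℝ => F j p.1 p.2) (Set.Icc 0 1 ×ˢ Set.Icc 0 1)) →
    ∀ a ∈ Set.Icc (0:ℝ) 1,
    ContinuousOn (fun t : Fin n → ℝ => Fin.foldl n (fun x j => F j x (t j)) a)
      (Set.univ.pi fun _ => Set.Icc 0 1)
  | 0, F, hF, hFc, a, ha => by
    simp only [Fin.foldl_zero]
    exact continuousOn_const
  | n+1, F, hF, hFc, a, ha => by
    simp only [Fin.foldl_succ_last]
    have hg := neofc_fold_contOn n (fun j => F j.castSucc) (fun j => hF j.castSucc)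
      (fun j => hFc j.castSucc) a ha
    have hres : Continuous (fun t : Fin (n+1) → ℝ => fun j : Fin n => t j.castSucc) :=
      continuous_pi fun j => continuous_apply _
    have hmaps0 : Set.MapsTo (fun t : Fin (n+1) → ℝ => fun j : Fin n => t j.castSucc)
        (Set.univ.pi fun _ => Set.Icc (0:ℝ) 1) (Set.univ.pi fun _ => Set.Icc (0:ℝ) 1) :=
      fun t ht j _ => ht j.castSucc (Set.mem_univ _)
    have hg' : ContinuousOn
        (fun t : Fin (n+1) → ℝ =>
          Fin.foldl n (fun x j => F j.castSucc x (t j.castSucc)) a)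
        (Set.univ.pi fun _ => Set.Icc 0 1) := by
      have := hg.comp hres.continuousOn hmaps0
      exact this
    have hpair : ContinuousOn
        (fun t : Fin (n+1) → ℝ =>
          ((Fin.foldl n (fun x j => F j.castSucc x (t j.castSucc)) a, t (Fin.last n)) : ℝ × ℝ))
        (Set.univ.pi fun _ => Set.Icc 0 1) :=
      hg'.prodMk ((continuous_apply (Fin.last n)).continuousOn)
    have hmaps : Set.MapsTo
        (fun t : Fin (n+1) → ℝ =>
          ((Fin.foldl n (fun x j => F j.castSucc x (t j.castSucc)) a, t (Fin.last n)) : ℝ × ℝ))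
        (Set.univ.pi fun _ => Set.Icc 0 1) (Set.Icc 0 1 ×ˢ Set.Icc 0 1) := by
      intro t ht
      refine ⟨?_, ht (Fin.last n) (Set.mem_univ _)⟩
      exact neofc_fold_mem n _ (fun j => hF j.castSucc) a ha _
        (fun j => ht j.castSucc (Set.mem_univ _))
    exact (hFc (Fin.last n)).comp hpair hmaps

/-- One-layer inequality: NQD `c₁` and SD `c₂` give
`a b ≤ ∫₀¹ ∂₂c₁(a,t) ∂₂c₂(b,t) dt`. -/
lemma neofc_one_layer (a b : ℝ) (ha : a ∈ Set.Icc (0:ℝ) 1) (hb : b ∈ Set.Icc (0:ℝ) 1)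
    (c₁ c₂ d₁ d₂ e₂ : ℝ → ℝ)
    (hd₁ : ∀ t ∈ Set.Icc (0:ℝ) 1, HasDerivAt c₁ (d₁ t) t)
    (hd₂ : ∀ t ∈ Set.Icc (0:ℝ) 1, HasDerivAt c₂ (d₂ t) t)
    (he₂ : ∀ t ∈ Set.Icc (0:ℝ) 1, HasDerivAt d₂ (e₂ t) t)
    (hc₁0 : c₁ 0 = 0) (hc₁1 : c₁ 1 = a) (hc₂0 : c₂ 0 = 0) (hc₂1 : c₂ 1 = b)
    (hnqd : ∀ t ∈ Set.Icc (0:ℝ) 1, c₁ t ≤ a * t)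
    (hsd : ∀ t ∈ Set.Icc (0:ℝ) 1, 0 ≤ e₂ t)
    (hd₁c : ContinuousOn d₁ (Set.Icc 0 1))
    (he₂c : ContinuousOn e₂ (Set.Icc 0 1)) :
    a * b ≤ ∫ t in (0:ℝ)..1, d₁ t * d₂ t := by
  have huIcc : Set.uIcc (0:ℝ) 1 = Set.Icc 0 1 := Set.uIcc_of_le zero_le_one
  have hc₁c : ContinuousOn c₁ (Set.Icc 0 1) :=
    fun t ht => (hd₁ t ht).continuousAt.continuousWithinAt
  have hd₂c : ContinuousOn d₂ (Set.Icc 0 1) :=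
    fun t ht => (he₂ t ht).continuousAt.continuousWithinAt
  have hid₁ : IntervalIntegrable d₁ volume 0 1 :=
    (huIcc ▸ hd₁c).intervalIntegrable
  have hid₂ : IntervalIntegrable d₂ volume 0 1 :=
    (huIcc ▸ hd₂c).intervalIntegrable
  have hie₂ : IntervalIntegrable e₂ volume 0 1 :=
    (huIcc ▸ he₂c).intervalIntegrable
  have h1 : ∫ t in (0:ℝ)..1, d₂ t * d₁ t
      = d₂ 1 * c₁ 1 - d₂ 0 * c₁ 0 - ∫ t in (0:ℝ)..1, e₂ t * c₁ t :=
    intervalIntegral.integral_mul_deriv_eq_deriv_mul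
      (fun x hx => he₂ x (huIcc ▸ hx)) (fun x hx => hd₁ x (huIcc ▸ hx)) hie₂ hid₁
  have h2 : ∫ t in (0:ℝ)..1, t * e₂ t
      = 1 * d₂ 1 - 0 * d₂ 0 - ∫ t in (0:ℝ)..1, (1:ℝ) * d₂ t :=
    intervalIntegral.integral_mul_deriv_eq_deriv_mul
      (fun x _ => hasDerivAt_id x) (fun x hx => he₂ x (huIcc ▸ hx))
      intervalIntegrable_const hie₂
  have h3 : ∫ t in (0:ℝ)..1, d₂ t = b := by
    rw [intervalIntegral.integral_eq_sub_of_hasDerivAt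
      (fun x hx => hd₂ x (huIcc ▸ hx)) hid₂, hc₂1, hc₂0, sub_zero]
  have h2' : ∫ t in (0:ℝ)..1, t * e₂ t = d₂ 1 - b := by
    rw [h2]
    have h21 : ∫ t in (0:ℝ)..1, (1:ℝ) * d₂ t = ∫ t in (0:ℝ)..1, d₂ t :=
      intervalIntegral.integral_congr (fun t _ => one_mul _)
    rw [h21, h3]; ring
  have h4 : ∫ t in (0:ℝ)..1, e₂ t * c₁ t ≤ ∫ t in (0:ℝ)..1, e₂ t * (a * t) := by
    refine intervalIntegral.integral_mono_on zero_le_one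
      ((huIcc ▸ he₂c.mul hc₁c).intervalIntegrable)
      ((huIcc ▸ he₂c.mul (Continuous.continuousOn (by continuity))).intervalIntegrable)
      (fun t ht => mul_le_mul_of_nonneg_left (hnqd t ht) (hsd t ht))
  have h5 : ∫ t in (0:ℝ)..1, e₂ t * (a * t) = a * (d₂ 1 - b) := by
    have hcong : ∫ t in (0:ℝ)..1, e₂ t * (a * t)
        = ∫ t in (0:ℝ)..1, a * (t * e₂ t) :=
      intervalIntegral.integral_congr (fun t _ => by ring)
    rw [hcong, intervalIntegral.integral_const_mul, h2']
  have hcomm : ∫ t in (0:ℝ)..1, d₁ t * d₂ t = ∫ t in (0:ℝ)..1, d₂ t * d₁ t :=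
    intervalIntegral.integral_congr (fun t _ => mul_comm _ _)
  rw [hcomm, h1, hc₁1, hc₁0]
  have h6 : ∫ t in (0:ℝ)..1, e₂ t * c₁ t ≤ a * (d₂ 1 - b) := h5 ▸ h4
  nlinarith [h6]

/-- Restriction of the volume on `Fin m → ℝ` to the unit cube is the product of
restricted one-dimensional measures. -/
lemma neofc_restrict_pi (m : ℕ) :
    (volume : Measure (Fin m → ℝ)).restrict (Set.univ.pi fun _ => Set.Icc (0:ℝ) 1)
      = Measure.pi (fun _ : Fin m => (volume : Measure ℝ).restrict (Set.Icc 0 1)) := by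
  refine (Measure.pi_eq fun s hs => ?_).symm
  rw [Measure.restrict_apply (MeasurableSet.univ_pi hs), ← Set.pi_inter_distrib,
    volume_pi, Measure.pi_pi]
  exact Finset.prod_congr rfl fun i _ => (Measure.restrict_apply (hs i)).symm

lemma neofc_mu0_eq (f : ℝ → ℝ) :
    ∫ s, f s ∂((volume : Measure ℝ).restrict (Set.Icc 0 1)) = ∫ s in (0:ℝ)..1, f s := by
  have h1 : ∫ s, f s ∂((volume : Measure ℝ).restrict (Set.Icc 0 1))
      = ∫ s in Set.Icc (0:ℝ) 1, f s := rfl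
  rw [h1, MeasureTheory.integral_Icc_eq_integral_Ioc,
    ← intervalIntegral.integral_of_le zero_le_one]

/-- The multi-layer inductive bound. -/
lemma neofc_key : ∀ (n : ℕ) (F1 F2 : Fin n → ℝ → ℝ → ℝ),
    (∀ j, ∀ x ∈ Set.Icc (0:ℝ) 1, ∀ s ∈ Set.Icc (0:ℝ) 1, F1 j x s ∈ Set.Icc (0:ℝ) 1) →
    (∀ j, ∀ x ∈ Set.Icc (0:ℝ) 1, ∀ s ∈ Set.Icc (0:ℝ) 1, F2 j x s ∈ Set.Icc (0:ℝ) 1) →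
    (∀ j, ContinuousOn (fun p : ℝ × ℝ => F1 j p.1 p.2) (Set.Icc 0 1 ×ˢ Set.Icc 0 1)) →
    (∀ j, ContinuousOn (fun p : ℝ × ℝ => F2 j p.1 p.2) (Set.Icc 0 1 ×ˢ Set.Icc 0 1)) →
    (∀ j, ∀ a ∈ Set.Icc (0:ℝ) 1, ∀ b ∈ Set.Icc (0:ℝ) 1,
      a * b ≤ ∫ s in (0:ℝ)..1, F1 j a s * F2 j b s) →
    ∀ a ∈ Set.Icc (0:ℝ) 1, ∀ b ∈ Set.Icc (0:ℝ) 1,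
    a * b ≤ ∫ t in Set.univ.pi (fun _ : Fin n => Set.Icc (0:ℝ) 1),
      (Fin.foldl n (fun x j => F1 j x (t j)) a) * (Fin.foldl n (fun x j => F2 j x (t j)) b)
  | 0, F1, F2, hF1, hF2, hF1c, hF2c, hlayer, a, ha, b, hb => by
    have hset : (Set.univ.pi fun _ : Fin 0 => Set.Icc (0:ℝ) 1) = Set.univ := by
      ext t; simp
    simp only [Fin.foldl_zero, hset, Measure.restrict_univ, integral_const]
    have hvol : (volume : Measure (Fin 0 → ℝ)) Set.univ = 1 := by
      rw [volume_pi, Measure.pi_univ]; simp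
    rw [Measure.real, hvol]; simp
  | n+1, F1, F2, hF1, hF2, hF1c, hF2c, hlayer, a, ha, b, hb => by
    classical
    set μ0 : Measure ℝ := (volume : Measure ℝ).restrict (Set.Icc 0 1) with hμ0
    haveI : IsFiniteMeasure μ0 := by
      constructor
      rw [hμ0, Measure.restrict_apply MeasurableSet.univ, Set.univ_inter, Real.volume_Icc]
      norm_num
    set Φ : (Fin (n+1) → ℝ) → ℝ := fun t =>
      (Fin.foldl (n+1) (fun x j => F1 j x (t j)) a) *
      (Fin.foldl (n+1) (fun x j => F2 j x (t j)) b) with hΦ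
    have hScpt : IsCompact (Set.univ.pi fun _ : Fin (n+1) => Set.Icc (0:ℝ) 1) :=
      isCompact_univ_pi fun _ => isCompact_Icc
    have hΦc : ContinuousOn Φ (Set.univ.pi fun _ : Fin (n+1) => Set.Icc (0:ℝ) 1) :=
      (neofc_fold_contOn (n+1) F1 hF1 hF1c a ha).mul
        (neofc_fold_contOn (n+1) F2 hF2 hF2c b hb)
    have hΦint : Integrable Φ (Measure.pi fun _ : Fin (n+1) => μ0) := by
      have h' : Integrable Φ ((volume : Measure (Fin (n+1) → ℝ)).restrict
        (Set.univ.pi fun _ => Set.Icc (0:ℝ) 1)) :=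
        hΦc.integrableOn_compact hScpt
      rwa [neofc_restrict_pi (n+1)] at h'
    set e := MeasurableEquiv.piFinSuccAbove (fun _ : Fin (n+1) => ℝ) (Fin.last n) with he
    have hmp : MeasurePreserving e (Measure.pi fun _ : Fin (n+1) => μ0)
        (μ0.prod (Measure.pi fun _ : Fin n => μ0)) :=
      measurePreserving_piFinSuccAbove (fun _ : Fin (n+1) => μ0) (Fin.last n)
    have hsymm : ∀ (s : ℝ) (t : Fin n → ℝ), e.symm (s, t) = Fin.snoc t s := by
      intro s t
      simp [he, MeasurableEquiv.piFinSuccAbove, Fin.insertNthEquiv, Fin.insertNth_last']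
    have hint2 : Integrable (fun z : ℝ × (Fin n → ℝ) => Φ (e.symm z))
        (μ0.prod (Measure.pi fun _ : Fin n => μ0)) :=
      ((MeasurePreserving.symm e hmp).integrable_comp_emb (MeasurableEquiv.measurableEmbedding e.symm)
        (g := Φ)).mpr hΦint
    have heq1 : ∫ t in Set.univ.pi (fun _ : Fin (n+1) => Set.Icc (0:ℝ) 1), Φ t
        = ∫ z, Φ (e.symm z) ∂(μ0.prod (Measure.pi fun _ : Fin n => μ0)) := by
      rw [neofc_restrict_pi (n+1),
        ← (MeasurePreserving.symm e hmp).integral_comp (MeasurableEquiv.measurableEmbedding e.symm) Φ]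
    have heq2 : ∫ z, Φ (e.symm z) ∂(μ0.prod (Measure.pi fun _ : Fin n => μ0))
        = ∫ t, (∫ s, Φ (e.symm (s, t)) ∂μ0) ∂(Measure.pi fun _ : Fin n => μ0) :=
      integral_prod_symm _ hint2
    have hinner : ∀ t : Fin n → ℝ, (∀ j, t j ∈ Set.Icc (0:ℝ) 1) →
        (Fin.foldl n (fun x j => F1 j.castSucc x (t j)) a)
          * (Fin.foldl n (fun x j => F2 j.castSucc x (t j)) b)
          ≤ ∫ s, Φ (e.symm (s, t)) ∂μ0 := by
      intro t ht
      have hA := neofc_fold_mem n (fun j => F1 j.castSucc) (fun j => hF1 j.castSucc) a ha t ht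
      have hB := neofc_fold_mem n (fun j => F2 j.castSucc) (fun j => hF2 j.castSucc) b hb t ht
      have hval : (fun s : ℝ => Φ (e.symm (s, t)))
          = fun s => F1 (Fin.last n) (Fin.foldl n (fun x j => F1 j.castSucc x (t j)) a) s
              * F2 (Fin.last n) (Fin.foldl n (fun x j => F2 j.castSucc x (t j)) b) s := by
        funext s
        rw [hsymm]
        simp only [hΦ, Fin.foldl_succ_last, Fin.snoc_castSucc, Fin.snoc_last]
      rw [hval, neofc_mu0_eq]
      exact hlayer (Fin.last n) _ hA _ hB
    have hmono : ∫ t in Set.univ.pi (fun _ : Fin n => Set.Icc (0:ℝ) 1),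
        ((Fin.foldl n (fun x j => F1 j.castSucc x (t j)) a)
          * (Fin.foldl n (fun x j => F2 j.castSucc x (t j)) b))
        ≤ ∫ t, (∫ s, Φ (e.symm (s, t)) ∂μ0) ∂(Measure.pi fun _ : Fin n => μ0) := by
      have hint3 : Integrable (fun t => ∫ s, Φ (e.symm (s, t)) ∂μ0)
          (Measure.pi fun _ : Fin n => μ0) := hint2.integral_prod_right
      have hABc : ContinuousOn (fun t : Fin n → ℝ =>
          (Fin.foldl n (fun x j => F1 j.castSucc x (t j)) a)
            * (Fin.foldl n (fun x j => F2 j.castSucc x (t j)) b))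
          (Set.univ.pi fun _ => Set.Icc 0 1) :=
        (neofc_fold_contOn n _ (fun j => hF1 j.castSucc) (fun j => hF1c j.castSucc) a ha).mul
          (neofc_fold_contOn n _ (fun j => hF2 j.castSucc) (fun j => hF2c j.castSucc) b hb)
      have hABint : IntegrableOn (fun t : Fin n → ℝ =>
          (Fin.foldl n (fun x j => F1 j.castSucc x (t j)) a)
            * (Fin.foldl n (fun x j => F2 j.castSucc x (t j)) b))
          (Set.univ.pi fun _ => Set.Icc 0 1) volume :=
        hABc.integrableOn_compact (isCompact_univ_pi fun _ => isCompact_Icc)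
      have hpieq : (Measure.pi fun _ : Fin n => μ0)
          = (volume : Measure (Fin n → ℝ)).restrict (Set.univ.pi fun _ => Set.Icc 0 1) :=
        (neofc_restrict_pi n).symm
      rw [hpieq]
      refine setIntegral_mono_on hABint ?_
        (MeasurableSet.univ_pi fun _ => measurableSet_Icc) ?_
      · have h' : Integrable (fun t => ∫ s, Φ (e.symm (s, t)) ∂μ0)
            ((volume : Measure (Fin n → ℝ)).restrict
              (Set.univ.pi fun _ => Set.Icc 0 1)) := by
          rwa [← hpieq]
        exact h'
      · intro t ht
        exact hinner t (fun j => ht j (Set.mem_univ _))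
    have hIH := neofc_key n (fun j => F1 j.castSucc) (fun j => F2 j.castSucc)
      (fun j => hF1 j.castSucc) (fun j => hF2 j.castSucc)
      (fun j => hF1c j.castSucc) (fun j => hF2c j.castSucc)
      (fun j => hlayer j.castSucc) a ha b hb
    calc a * b
        ≤ ∫ t in Set.univ.pi (fun _ : Fin n => Set.Icc (0:ℝ) 1),
            ((Fin.foldl n (fun x j => F1 j.castSucc x (t j)) a)
              * (Fin.foldl n (fun x j => F2 j.castSucc x (t j)) b)) := hIH
      _ ≤ ∫ t, (∫ s, Φ (e.symm (s, t)) ∂μ0) ∂(Measure.pi fun _ : Fin n => μ0) := hmono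
      _ = ∫ z, Φ (e.symm z) ∂(μ0.prod (Measure.pi fun _ : Fin n => μ0)) := heq2.symm
      _ = ∫ t in Set.univ.pi (fun _ : Fin (n+1) => Set.Icc (0:ℝ) 1), Φ t := heq1.symm

end Aux

/-- A bivariate nested extended one-factor copula with `w` layers whose inner copula is
PQD for every factor value (`G t a b ≥ a b`), such that at each layer `j` one linking
copula is NQD and the other is SD with respect to the factor `T_j`, is PQD. Here
`C i j`, `D i j`, `D2 i j` are the linking copula of variable `i` at layer `j`, its
second-variable partial derivative and second second-variable partial derivative, and
`Fin.foldl w (fun a j => D i j a (t j)) uᵢ` is the iterated composition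
`G_i(u_i; t_w, …, t_1)`. -/
theorem neofc_w_layers_pqd (w : ℕ) (hw : 1 ≤ w) (u₁ u₂ : ℝ)
    (hu₁ : u₁ ∈ Set.Icc (0:ℝ) 1) (hu₂ : u₂ ∈ Set.Icc (0:ℝ) 1)
    (C D D2 : Fin 2 → Fin w → ℝ → ℝ → ℝ)
    (hCc : ∀ i j, ContinuousOn (fun p : ℝ × ℝ => C i j p.1 p.2)
      (Set.Icc 0 1 ×ˢ Set.Icc 0 1))
    (hDc : ∀ i j, ContinuousOn (fun p : ℝ × ℝ => D i j p.1 p.2)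
      (Set.Icc 0 1 ×ˢ Set.Icc 0 1))
    (hD2c : ∀ i j, ContinuousOn (fun p : ℝ × ℝ => D2 i j p.1 p.2)
      (Set.Icc 0 1 ×ˢ Set.Icc 0 1))
    (hder : ∀ i j, ∀ v ∈ Set.Icc (0:ℝ) 1, ∀ t ∈ Set.Icc (0:ℝ) 1,
      HasDerivAt (fun s => C i j v s) (D i j v t) t)
    (hder2 : ∀ i j, ∀ v ∈ Set.Icc (0:ℝ) 1, ∀ t ∈ Set.Icc (0:ℝ) 1,
      HasDerivAt (fun s => D i j v s) (D2 i j v t) t)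
    (hC0 : ∀ i j, ∀ v ∈ Set.Icc (0:ℝ) 1, C i j v 0 = 0)
    (hC1 : ∀ i j, ∀ v ∈ Set.Icc (0:ℝ) 1, C i j v 1 = v)
    (hDb : ∀ i j, ∀ v ∈ Set.Icc (0:ℝ) 1, ∀ t ∈ Set.Icc (0:ℝ) 1,
      D i j v t ∈ Set.Icc (0:ℝ) 1)
    (hcase : ∀ j,
      ((∀ v ∈ Set.Icc (0:ℝ) 1, ∀ t ∈ Set.Icc (0:ℝ) 1, C 0 j v t ≤ v * t) ∧
        (∀ v ∈ Set.Icc (0:ℝ) 1, ∀ t ∈ Set.Icc (0:ℝ) 1, 0 ≤ D2 1 j v t)) ∨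
      ((∀ v ∈ Set.Icc (0:ℝ) 1, ∀ t ∈ Set.Icc (0:ℝ) 1, C 1 j v t ≤ v * t) ∧
        (∀ v ∈ Set.Icc (0:ℝ) 1, ∀ t ∈ Set.Icc (0:ℝ) 1, 0 ≤ D2 0 j v t)))
    (G : ℝ → ℝ → ℝ → ℝ)
    (hGc : ContinuousOn (fun p : ℝ × ℝ × ℝ => G p.1 p.2.1 p.2.2)
      (Set.Icc 0 1 ×ˢ Set.Icc 0 1 ×ˢ Set.Icc 0 1))
    (hG : ∀ t ∈ Set.Icc (0:ℝ) 1, ∀ a ∈ Set.Icc (0:ℝ) 1, ∀ b ∈ Set.Icc (0:ℝ) 1,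
      a * b ≤ G t a b) :
    u₁ * u₂ ≤ ∫ t in Set.univ.pi (fun _ : Fin w => Set.Icc (0:ℝ) 1),
      G (t ⟨w - 1, by omega⟩)
        (Fin.foldl w (fun a j => D 0 j a (t j)) u₁)
        (Fin.foldl w (fun a j => D 1 j a (t j)) u₂) := by
  -- layer-wise inequality
  have hlayer : ∀ j, ∀ a ∈ Set.Icc (0:ℝ) 1, ∀ b ∈ Set.Icc (0:ℝ) 1,
      a * b ≤ ∫ s in (0:ℝ)..1, D 0 j a s * D 1 j b s := by
    intro j a ha b hb
    rcases hcase j with ⟨hnqd, hsd⟩ | ⟨hnqd, hsd⟩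
    · exact neofc_one_layer a b ha hb (C 0 j a) (C 1 j b) (D 0 j a) (D 1 j b) (D2 1 j b)
        (hder 0 j a ha) (hder 1 j b hb) (hder2 1 j b hb)
        (hC0 0 j a ha) (hC1 0 j a ha) (hC0 1 j b hb) (hC1 1 j b hb)
        (hnqd a ha) (fun t ht => hsd b hb t ht)
        (neofc_sectionCont (hDc 0 j) ha) (neofc_sectionCont (hD2c 1 j) hb)
    · have h := neofc_one_layer b a hb ha (C 1 j b) (C 0 j a) (D 1 j b) (D 0 j a) (D2 0 j a)
        (hder 1 j b hb) (hder 0 j a ha) (hder2 0 j a ha)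
        (hC0 1 j b hb) (hC1 1 j b hb) (hC0 0 j a ha) (hC1 0 j a ha)
        (hnqd b hb) (fun t ht => hsd a ha t ht)
        (neofc_sectionCont (hDc 1 j) hb) (neofc_sectionCont (hD2c 0 j) ha)
      have hcomm : ∫ s in (0:ℝ)..1, D 1 j b s * D 0 j a s
          = ∫ s in (0:ℝ)..1, D 0 j a s * D 1 j b s :=
        intervalIntegral.integral_congr (fun s _ => mul_comm _ _)
      rw [mul_comm]
      rwa [hcomm] at h
  have hkey := neofc_key w (fun j => D 0 j) (fun j => D 1 j)
    (fun j => hDb 0 j) (fun j => hDb 1 j) (fun j => hDc 0 j) (fun j => hDc 1 j)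
    hlayer u₁ hu₁ u₂ hu₂
  -- compare with the integral of G
  have hS : MeasurableSet (Set.univ.pi fun _ : Fin w => Set.Icc (0:ℝ) 1) :=
    MeasurableSet.univ_pi fun _ => measurableSet_Icc
  have hScpt : IsCompact (Set.univ.pi fun _ : Fin w => Set.Icc (0:ℝ) 1) :=
    isCompact_univ_pi fun _ => isCompact_Icc
  have hAc := neofc_fold_contOn w (fun j => D 0 j) (fun j => hDb 0 j) (fun j => hDc 0 j) u₁ hu₁
  have hBc := neofc_fold_contOn w (fun j => D 1 j) (fun j => hDb 1 j) (fun j => hDc 1 j) u₂ hu₂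
  have hGcomp : ContinuousOn (fun t : Fin w → ℝ =>
      G (t ⟨w - 1, by omega⟩)
        (Fin.foldl w (fun a j => D 0 j a (t j)) u₁)
        (Fin.foldl w (fun a j => D 1 j a (t j)) u₂))
      (Set.univ.pi fun _ => Set.Icc 0 1) := by
    have hpair : ContinuousOn (fun t : Fin w → ℝ =>
        ((t ⟨w - 1, by omega⟩,
          (Fin.foldl w (fun a j => D 0 j a (t j)) u₁,
           Fin.foldl w (fun a j => D 1 j a (t j)) u₂)) : ℝ × ℝ × ℝ))
        (Set.univ.pi fun _ => Set.Icc 0 1) :=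
      ((continuous_apply _).continuousOn).prodMk (hAc.prodMk hBc)
    have hmaps : Set.MapsTo (fun t : Fin w → ℝ =>
        ((t ⟨w - 1, by omega⟩,
          (Fin.foldl w (fun a j => D 0 j a (t j)) u₁,
           Fin.foldl w (fun a j => D 1 j a (t j)) u₂)) : ℝ × ℝ × ℝ))
        (Set.univ.pi fun _ => Set.Icc 0 1)
        (Set.Icc 0 1 ×ˢ Set.Icc 0 1 ×ˢ Set.Icc 0 1) := by
      intro t ht
      refine ⟨ht _ (Set.mem_univ _), ?_, ?_⟩
      · exact neofc_fold_mem w _ (fun j => hDb 0 j) u₁ hu₁ t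
          (fun j => ht j (Set.mem_univ _))
      · exact neofc_fold_mem w _ (fun j => hDb 1 j) u₂ hu₂ t
          (fun j => ht j (Set.mem_univ _))
    exact hGc.comp hpair hmaps
  have hABint : IntegrableOn (fun t : Fin w → ℝ =>
      (Fin.foldl w (fun a j => D 0 j a (t j)) u₁)
        * (Fin.foldl w (fun a j => D 1 j a (t j)) u₂))
      (Set.univ.pi fun _ => Set.Icc 0 1) volume :=
    (hAc.mul hBc).integrableOn_compact hScpt
  have hGint : IntegrableOn (fun t : Fin w → ℝ =>
      G (t ⟨w - 1, by omega⟩)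
        (Fin.foldl w (fun a j => D 0 j a (t j)) u₁)
        (Fin.foldl w (fun a j => D 1 j a (t j)) u₂))
      (Set.univ.pi fun _ => Set.Icc 0 1) volume :=
    hGcomp.integrableOn_compact hScpt
  refine le_trans hkey ?_
  refine setIntegral_mono_on hABint hGint hS ?_
  intro t ht
  exact hG _ (ht _ (Set.mem_univ _))
    _ (neofc_fold_mem w _ (fun j => hDb 0 j) u₁ hu₁ t (fun j => ht j (Set.mem_univ _)))
    _ (neofc_fold_mem w _ (fun j => hDb 1 j) u₂ hu₂ t (fun j => ht j (Set.mem_univ _)))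
end

section
/- Let μ be a probability measure on ℝ with μ((-∞,0)) = 0, and let Q₀ : ℝ → ℝ be measurable with Q₀(s) > 0 for all s ∈ (0,1), such that the pushforward under Q₀ of the Lebesgue measure restricted to (0,1) equals μ. Define ψ(x) = ∫ exp(−t·x) dμ(t). Let ψinv, φ, φinv : ℝ → ℝ, set ν(y) = ψinv(φ(y)) and νinv(y) = φinv(ψ(y)), and let u₁, u₂, u₃ ∈ ℝ satisfy: ψinv(u_i) ≥ 0 for i = 1,2,3; ψ(ψinv(u_i)) = u_i for i = 1,2; and ψinv(φ(φinv(u₁) + φinv(u₂))) ≥ 0. Then ∫₀¹ exp(−Q₀(s) · ν(νinv((1/Q₀(s))·log(1/exp(−Q₀(s)·ψinv(u₁)))) + νinv((1/Q₀(s))·log(1/exp(−Q₀(s)·ψinv(u₂)))))) · exp(−Q₀(s)·ψinv(u₃)) ds = ψ(ψinv(φ(φinv(u₁) + φinv(u₂))) + ψinv(u₃)). (This is the paper's Proposition that the three-variate extended one-factor copula with the stated conditional copula C_{x₀} and Archimedean-type linking copulas equals the hierarchical Archimedean copula ψ₁₂₃(ψ₁₂₃⁻¹(ψ₁₂(ψ₁₂⁻¹(u₁)+ψ₁₂⁻¹(u₂)))+ψ₁₂₃⁻¹(u₃)),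 where ψ₁₂₃ = ψ, ψ₁₂ = φ and ψ₁₂₃⁻¹ = ψinv, ψ₁₂⁻¹ = φinv.) -/
open MeasureTheory

/-- The three-variate extended one-factor copula with the nested-Archimedean conditional
copula `C_{x₀}(u,v,w) = exp(−x₀·ν(ν⁻¹[(1/x₀)log(1/u)] + ν⁻¹[(1/x₀)log(1/v)]))·w`
(`ν = ψ⁻¹∘φ`, `ν⁻¹ = φ⁻¹∘ψ`), evaluated at conditional distributions
`C_{i|0}(u_i|s) = exp(−Q₀(s)·ψ⁻¹(u_i))` and integrated over the factor, equals the
hierarchical Archimedean copula `ψ(ψ⁻¹(φ(φ⁻¹(u₁)+φ⁻¹(u₂)))+ψ⁻¹(u₃))`. Here `ψ = ψ₁₂₃`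
is the Laplace transform of the factor distribution `μ`, `φ = ψ₁₂`, `ψinv = ψ₁₂₃⁻¹`,
`φinv = ψ₁₂⁻¹`. -/
theorem eofc_hierarchical_archimedean (μ : Measure ℝ) [IsProbabilityMeasure μ]
    (hμ : μ (Set.Iio 0) = 0) (Q₀ : ℝ → ℝ) (hQm : Measurable Q₀)
    (hQpos : ∀ s ∈ Set.Ioo (0:ℝ) 1, 0 < Q₀ s)
    (hmap : Measure.map Q₀ (volume.restrict (Set.Ioo (0:ℝ) 1)) = μ)
    (ψ : ℝ → ℝ) (hψ : ∀ x, ψ x = ∫ t, Real.exp (-(t * x)) ∂μ)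
    (ψinv φ φinv ν νinv : ℝ → ℝ)
    (hν : ∀ y, ν y = ψinv (φ y)) (hνinv : ∀ y, νinv y = φinv (ψ y))
    (u₁ u₂ u₃ : ℝ)
    (hpos₁ : 0 ≤ ψinv u₁) (hpos₂ : 0 ≤ ψinv u₂) (hpos₃ : 0 ≤ ψinv u₃)
    (hinv₁ : ψ (ψinv u₁) = u₁) (hinv₂ : ψ (ψinv u₂) = u₂)
    (hpos₁₂ : 0 ≤ ψinv (φ (φinv u₁ + φinv u₂))) :
    ∫ s in (0:ℝ)..1,
        Real.exp (-(Q₀ s *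
          ν (νinv ((1 / Q₀ s) * Real.log (1 / Real.exp (-(Q₀ s * ψinv u₁)))) +
             νinv ((1 / Q₀ s) * Real.log (1 / Real.exp (-(Q₀ s * ψinv u₂))))))) *
        Real.exp (-(Q₀ s * ψinv u₃))
      = ψ (ψinv (φ (φinv u₁ + φinv u₂)) + ψinv u₃) := by
  have hA : ∀ s ∈ Set.Ioo (0:ℝ) 1,
      Real.exp (-(Q₀ s *
          ν (νinv ((1 / Q₀ s) * Real.log (1 / Real.exp (-(Q₀ s * ψinv u₁)))) +
             νinv ((1 / Q₀ s) * Real.log (1 / Real.exp (-(Q₀ s * ψinv u₂))))))) *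
        Real.exp (-(Q₀ s * ψinv u₃))
      = Real.exp (-(Q₀ s * (ψinv (φ (φinv u₁ + φinv u₂)) + ψinv u₃))) := by
    intro s hs
    have hq := (hQpos s hs).ne'
    have hl : ∀ a : ℝ, Real.log (1 / Real.exp (-(Q₀ s * a))) = Q₀ s * a := by
      intro a
      rw [one_div, ← Real.exp_neg, neg_neg, Real.log_exp]
    have h1 : (1 / Q₀ s) * Real.log (1 / Real.exp (-(Q₀ s * ψinv u₁))) = ψinv u₁ := by
      rw [hl]; field_simp
    have h2 : (1 / Q₀ s) * Real.log (1 / Real.exp (-(Q₀ s * ψinv u₂))) = ψinv u₂ := by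
      rw [hl]; field_simp
    rw [h1, h2, hνinv, hνinv, hinv₁, hinv₂, hν, ← Real.exp_add]
    ring_nf
  rw [intervalIntegral.integral_of_le (by norm_num : (0:ℝ) ≤ 1),
    MeasureTheory.integral_Ioc_eq_integral_Ioo,
    MeasureTheory.setIntegral_congr_fun measurableSet_Ioo hA, hψ, ← hmap,
    integral_map hQm.aemeasurable
      ((by fun_prop : Measurable fun t : ℝ =>
        Real.exp (-(t * (ψinv (φ (φinv u₁ + φinv u₂)) + ψinv u₃)))).aestronglyMeasurable)]
end

section
/- Let θ₁, θ₂ ∈ [−1,1] and u₁, u₂ ∈ [0,1]. For i = 1,2, let C_i(u,t) = u·t + θ_i·u·t·(1−u)·(1−t) be the Farlie–Gumbel–Morgenstern copula with parameter θ_i. Then ∫₀¹ (d/dt C₁(u₁,t)) · (d/dt C₂(u₂,t)) dt = u₁·u₂ + (θ₁·θ₂/3)·u₁·u₂·(1−u₁)·(1−u₂); equivalently, ∫₀¹ (u₁ + θ₁·u₁·(1−u₁)·(1−2t)) · (u₂ + θ₂·u₂·(1−u₂)·(1−2t)) dt = u₁·u₂ + (θ₁·θ₂/3)·u₁·u₂·(1−u₁)·(1−u₂).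 (This is the paper's claim that the bivariate one-factor copula with inner copula Π and FGM linking copulas with parameters θ₁ and θ₂ is the FGM copula with parameter θ₁θ₂/3; in particular the model is not identifiable, since any (θ₁′,θ₂′) with θ₁′θ₂′ = θ₁θ₂ yields the same outer copula.) -/
open MeasureTheory

lemma quad_int (c0 c1 c2 : ℝ) :
    ∫ t in (0:ℝ)..1, (c0 + c1 * t + c2 * t ^ 2) = c0 + c1 / 2 + c2 / 3 := by
  have h0 : IntervalIntegrable (fun _ : ℝ => c0) volume 0 1 :=
    intervalIntegrable_const
  have h1 : IntervalIntegrable (fun t : ℝ => c1 * t) volume 0 1 :=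
    (continuous_const.mul continuous_id).intervalIntegrable _ _
  have h2 : IntervalIntegrable (fun t : ℝ => c2 * t ^ 2) volume 0 1 :=
    (continuous_const.mul (continuous_pow 2)).intervalIntegrable _ _
  rw [intervalIntegral.integral_add (h0.add h1) h2, intervalIntegral.integral_add h0 h1,
    intervalIntegral.integral_const, intervalIntegral.integral_const_mul,
    intervalIntegral.integral_const_mul, integral_id, integral_pow]
  norm_num; ring

lemma fgm_key (a b c d : ℝ) :
    ∫ t in (0:ℝ)..1, (a + b * (1 - 2 * t)) * (c + d * (1 - 2 * t)) = a * c + b * d / 3 := by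
  have h : ∀ t ∈ Set.uIcc (0:ℝ) 1,
      (a + b * (1 - 2 * t)) * (c + d * (1 - 2 * t)) =
        (a * c + a * d + b * c + b * d) + (-(2 * a * d) - 2 * b * c - 4 * b * d) * t
          + (4 * b * d) * t ^ 2 := by
    intro t _; ring
  rw [intervalIntegral.integral_congr h, quad_int]; ring

lemma fgm_deriv (c u t : ℝ) :
    deriv (fun s => u * s + c * (s - s ^ 2)) t = u + c * (1 - 2 * t) := by
  have h1 : HasDerivAt (fun s : ℝ => u * s) u t := by
    simpa using (hasDerivAt_id t).const_mul u
  have h2 : HasDerivAt (fun s : ℝ => s - s ^ 2) (1 - 2 * t) t := by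
    simpa using (hasDerivAt_id t).fun_sub (hasDerivAt_pow 2 t)
  exact (h1.add (h2.const_mul c)).deriv

/-- The bivariate one-factor copula with inner copula the independence copula and FGM
linking copulas with parameters `θ₁` and `θ₂` is the FGM copula with parameter
`θ₁θ₂/3`; in particular the model is not identifiable, since any `(θ₁',θ₂')` with
`θ₁'θ₂' = θ₁θ₂` yields the same outer copula. Both the `deriv` form and the explicit
form of the integrand are stated. -/
theorem ofc_fgm (θ₁ θ₂ : ℝ) (hθ₁ : θ₁ ∈ Set.Icc (-1:ℝ) 1) (hθ₂ : θ₂ ∈ Set.Icc (-1:ℝ) 1)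
    (u₁ u₂ : ℝ) (hu₁ : u₁ ∈ Set.Icc (0:ℝ) 1) (hu₂ : u₂ ∈ Set.Icc (0:ℝ) 1)
    (C₁ C₂ : ℝ → ℝ → ℝ)
    (hC₁ : ∀ u t, C₁ u t = u * t + θ₁ * u * t * (1 - u) * (1 - t))
    (hC₂ : ∀ u t, C₂ u t = u * t + θ₂ * u * t * (1 - u) * (1 - t)) :
    (∫ t in (0:ℝ)..1, deriv (fun s => C₁ u₁ s) t * deriv (fun s => C₂ u₂ s) t
        = u₁ * u₂ + (θ₁ * θ₂ / 3) * u₁ * u₂ * (1 - u₁) * (1 - u₂)) ∧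
    (∫ t in (0:ℝ)..1,
        (u₁ + θ₁ * u₁ * (1 - u₁) * (1 - 2 * t)) * (u₂ + θ₂ * u₂ * (1 - u₂) * (1 - 2 * t))
        = u₁ * u₂ + (θ₁ * θ₂ / 3) * u₁ * u₂ * (1 - u₁) * (1 - u₂)) := by
  have e₁ : (fun s => C₁ u₁ s) = fun s => u₁ * s + (θ₁ * u₁ * (1 - u₁)) * (s - s ^ 2) := by
    funext s; rw [hC₁]; ring
  have e₂ : (fun s => C₂ u₂ s) = fun s => u₂ * s + (θ₂ * u₂ * (1 - u₂)) * (s - s ^ 2) := by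
    funext s; rw [hC₂]; ring
  have h2 : ∫ t in (0:ℝ)..1,
      (u₁ + θ₁ * u₁ * (1 - u₁) * (1 - 2 * t)) * (u₂ + θ₂ * u₂ * (1 - u₂) * (1 - 2 * t))
      = u₁ * u₂ + (θ₁ * θ₂ / 3) * u₁ * u₂ * (1 - u₁) * (1 - u₂) := by
    rw [fgm_key]; ring
  refine ⟨?_, h2⟩
  rw [e₁, e₂]
  simpa only [fgm_deriv] using h2
end

section
/- Let (Ω, 𝒜, P) be a probability space and let Z₀, W₁, E : Ω → ℝ be independent random variables, each with law the standard Gaussian measure N(0,1) on ℝ. Let ρ, Δ₁, Δ₂ ∈ [−1,1], and define W₂ = ρ·W₁ + √(1−ρ²)·E and X_i = Δ_i·Z₀ + √(1−Δ_i²)·W_i for i = 1,2. Set r = ρ·√(1−Δ₁²)·√(1−Δ₂²) + Δ₁·Δ₂. Then for all a, b ∈ ℝ, the law of a·X₁ + b·X₂ is the Gaussian measure N(0, a² + b² + 2·a·b·r) on ℝ. In particular each X_i has law N(0,1) and (X₁,X₂) is bivariate Gaussian with correlation r. (This is the d = 2 case of the paper's Proposition that an extended one-factor copula with bivariate Gaussian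 linking copulas of correlations Δ₁, Δ₂ and inner Gaussian copula of correlation ρ_A = ρ is the bivariate Gaussian copula with correlation ρ_A·√(1−Δ₁²)·√(1−Δ₂²) + Δ₁·Δ₂.) -/
open MeasureTheory ProbabilityTheory Real
open scoped ENNReal NNReal

namespace EOFCAux

lemma coe_pos_of_ne_zero {v : ℝ≥0} (hv : v ≠ 0) : (0:ℝ) < v :=
  NNReal.coe_pos.mpr (pos_iff_ne_zero.mpr hv)

lemma pdf_mul_pdf (v w : ℝ≥0) (hv : v ≠ 0) (hw : w ≠ 0) (z x : ℝ) :
    gaussianPDFReal 0 v x * gaussianPDFReal 0 w (z - x)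
      = gaussianPDFReal 0 (v + w) z *
        (Real.sqrt (((v:ℝ) + w) / (2 * v * w) / π) *
          Real.exp (-(((v:ℝ) + w) / (2 * v * w)) * (x - (v:ℝ) * z / ((v:ℝ) + w)) ^ 2)) := by
  have hV : (0:ℝ) < v := coe_pos_of_ne_zero hv
  have hW : (0:ℝ) < w := coe_pos_of_ne_zero hw
  have hπ : (0:ℝ) < π := Real.pi_pos
  simp only [gaussianPDFReal, sub_zero, NNReal.coe_add]
  have hcoef : (√(2 * π * (v:ℝ)))⁻¹ * (√(2 * π * (w:ℝ)))⁻¹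
      = (√(2 * π * ((v:ℝ) + w)))⁻¹ * √(((v:ℝ) + w) / (2 * v * w) / π) := by
    rw [← Real.sqrt_inv, ← Real.sqrt_inv, ← Real.sqrt_inv,
      ← Real.sqrt_mul (by positivity), ← Real.sqrt_mul (by positivity)]
    congr 1
    field_simp
  have hexp : -(x:ℝ)^2 / (2 * (v:ℝ)) + -(z - x)^2 / (2 * (w:ℝ))
      = -z^2 / (2 * ((v:ℝ) + w))
        + -(((v:ℝ) + w) / (2 * v * w)) * (x - (v:ℝ) * z / ((v:ℝ) + w)) ^ 2 := by
    field_simp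
    ring
  calc (√(2 * π * (v:ℝ)))⁻¹ * rexp (-x ^ 2 / (2 * (v:ℝ)))
        * ((√(2 * π * (w:ℝ)))⁻¹ * rexp (-(z - x) ^ 2 / (2 * (w:ℝ))))
      = ((√(2 * π * (v:ℝ)))⁻¹ * (√(2 * π * (w:ℝ)))⁻¹)
        * rexp (-x ^ 2 / (2 * (v:ℝ)) + -(z - x) ^ 2 / (2 * (w:ℝ))) := by
        rw [Real.exp_add]; ring
    _ = _ := by rw [hcoef, hexp, Real.exp_add]; ring

lemma integral_aux {B : ℝ} (hB : 0 < B) (m : ℝ) :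
    ∫ x : ℝ, Real.sqrt (B / π) * Real.exp (-B * (x - m) ^ 2) = 1 := by
  rw [integral_const_mul]
  have h1 : (∫ x : ℝ, Real.exp (-B * (x - m) ^ 2))
      = ∫ x : ℝ, Real.exp (-B * x ^ 2) :=
    integral_sub_right_eq_self (fun x => Real.exp (-B * x ^ 2)) m
  rw [h1, integral_gaussian, ← Real.sqrt_mul (by positivity)]
  have hπ : (0:ℝ) < π := Real.pi_pos
  have : B / π * (π / B) = 1 := by field_simp
  rw [this, Real.sqrt_one]

lemma lintegral_pdf_conv (v w : ℝ≥0) (hv : v ≠ 0) (hw : w ≠ 0) (z : ℝ) :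
    ∫⁻ x : ℝ, gaussianPDF 0 v x * gaussianPDF 0 w (z - x) = gaussianPDF 0 (v + w) z := by
  have hV : (0:ℝ) < v := coe_pos_of_ne_zero hv
  have hW : (0:ℝ) < w := coe_pos_of_ne_zero hw
  set B : ℝ := ((v:ℝ) + w) / (2 * v * w) with hBdef
  set m : ℝ := (v:ℝ) * z / ((v:ℝ) + w) with hmdef
  have hB : 0 < B := by positivity
  have key : ∀ x : ℝ, gaussianPDF 0 v x * gaussianPDF 0 w (z - x)
      = ENNReal.ofReal (gaussianPDFReal 0 (v + w) z)
        * ENNReal.ofReal (Real.sqrt (B / π) * Real.exp (-B * (x - m) ^ 2)) := by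
    intro x
    rw [gaussianPDF, gaussianPDF, ← ENNReal.ofReal_mul (gaussianPDFReal_nonneg _ _ _),
      pdf_mul_pdf v w hv hw z x,
      ENNReal.ofReal_mul (gaussianPDFReal_nonneg _ _ _)]
  simp_rw [key]
  rw [lintegral_const_mul' _ _ ENNReal.ofReal_ne_top,
    ← ofReal_integral_eq_lintegral_ofReal
      (((integrable_exp_neg_mul_sq hB).comp_sub_right m).const_mul _)
      (ae_of_all _ fun x => by positivity),
    integral_aux hB m]
  simp [gaussianPDF]

lemma gaussianReal_conv (v w : ℝ≥0) :
    ((gaussianReal 0 v).prod (gaussianReal 0 w)).map (fun p : ℝ × ℝ => p.1 + p.2)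
      = gaussianReal 0 (v + w) := by
  rcases eq_or_ne v 0 with rfl | hv
  · rw [gaussianReal_zero_var, Measure.dirac_prod,
      Measure.map_map measurable_add measurable_prodMk_left]
    simp [Function.comp_def]
  rcases eq_or_ne w 0 with rfl | hw
  · rw [gaussianReal_zero_var, Measure.prod_dirac,
      Measure.map_map measurable_add measurable_prodMk_right]
    simp [Function.comp_def]
  have hvw : v + w ≠ 0 := by simp [add_eq_zero, hv, hw]
  refine Measure.ext fun s hs => ?_
  rw [Measure.map_apply measurable_add hs, gaussianReal_of_var_ne_zero 0 hv,
    gaussianReal_of_var_ne_zero 0 hw,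
    Measure.prod_apply (measurable_add hs)]
  have step1 : ∀ x : ℝ,
      (volume.withDensity (gaussianPDF 0 w)) (Prod.mk x ⁻¹' ((fun p : ℝ × ℝ => p.1 + p.2) ⁻¹' s))
        = ∫⁻ z : ℝ, s.indicator 1 z * gaussianPDF 0 w (z - x) := by
    intro x
    have hsx : MeasurableSet ((fun y : ℝ => x + y) ⁻¹' s) := (measurable_const_add x) hs
    have hpre : Prod.mk x ⁻¹' ((fun p : ℝ × ℝ => p.1 + p.2) ⁻¹' s)
        = (fun y : ℝ => x + y) ⁻¹' s := rfl
    rw [hpre, withDensity_apply _ hsx, ← lintegral_indicator hsx]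
    have hpt : ∀ y : ℝ, ((fun y : ℝ => x + y) ⁻¹' s).indicator (gaussianPDF 0 w) y
        = s.indicator 1 (x + y) * gaussianPDF 0 w ((x + y) - x) := by
      intro y
      by_cases h : x + y ∈ s <;>
        simp [Set.indicator, h, add_sub_cancel_left]
    simp_rw [hpt]
    exact lintegral_add_left_eq_self (fun u => s.indicator 1 u * gaussianPDF 0 w (u - x)) x
  simp_rw [step1]
  have hmeas_inner : Measurable fun x : ℝ => ∫⁻ z : ℝ, s.indicator 1 z * gaussianPDF 0 w (z - x) := by
    apply Measurable.lintegral_prod_right'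
      (f := fun p : ℝ × ℝ => s.indicator 1 p.2 * gaussianPDF 0 w (p.2 - p.1))
    exact ((measurable_one.indicator hs).comp measurable_snd).mul
      ((measurable_gaussianPDF 0 w).comp (measurable_snd.sub measurable_fst))
  rw [lintegral_withDensity_eq_lintegral_mul volume (measurable_gaussianPDF 0 v) hmeas_inner]
  simp only [Pi.mul_apply]
  have pull : ∀ x : ℝ, gaussianPDF 0 v x * ∫⁻ z : ℝ, s.indicator 1 z * gaussianPDF 0 w (z - x)
      = ∫⁻ z : ℝ, gaussianPDF 0 v x * (s.indicator 1 z * gaussianPDF 0 w (z - x)) := fun x =>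
    (lintegral_const_mul' _ _ (by simp [gaussianPDF])).symm
  simp_rw [pull]
  rw [lintegral_lintegral_swap]
  swap
  · exact (((measurable_gaussianPDF 0 v).comp measurable_fst).mul
      (((measurable_one.indicator hs).comp measurable_snd).mul
        ((measurable_gaussianPDF 0 w).comp (measurable_snd.sub measurable_fst)))).aemeasurable
  have inner : ∀ z : ℝ, (∫⁻ x : ℝ, gaussianPDF 0 v x * (s.indicator 1 z * gaussianPDF 0 w (z - x)))
      = s.indicator (gaussianPDF 0 (v + w)) z := by
    intro z
    have hne : s.indicator (1 : ℝ → ℝ≥0∞) z ≠ ⊤ := by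
      by_cases h : z ∈ s <;> simp [h]
    calc (∫⁻ x : ℝ, gaussianPDF 0 v x * (s.indicator 1 z * gaussianPDF 0 w (z - x)))
        = ∫⁻ x : ℝ, s.indicator 1 z * (gaussianPDF 0 v x * gaussianPDF 0 w (z - x)) := by
          congr 1; funext x; ring
      _ = s.indicator 1 z * ∫⁻ x : ℝ, gaussianPDF 0 v x * gaussianPDF 0 w (z - x) :=
          lintegral_const_mul' _ _ hne
      _ = s.indicator 1 z * gaussianPDF 0 (v + w) z := by rw [lintegral_pdf_conv v w hv hw z]
      _ = s.indicator (gaussianPDF 0 (v + w)) z := by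
          by_cases h : z ∈ s <;> simp [h]
  simp_rw [inner]
  rw [lintegral_indicator hs, ← gaussianReal_apply 0 hvw s]

lemma map_const_mul {Ω : Type*} [MeasurableSpace Ω] (P : Measure Ω) [IsProbabilityMeasure P]
    {X : Ω → ℝ} (hX : Measurable X) (hlaw : P.map X = gaussianReal 0 1) (c : ℝ) :
    P.map (fun ω => c * X ω) = gaussianReal 0 ⟨c ^ 2, sq_nonneg c⟩ := by
  have h : (fun ω => c * X ω) = (fun x => c * x) ∘ X := rfl
  rw [h, ← Measure.map_map ((by fun_prop : Measurable fun x : ℝ => c * x)) hX, hlaw,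
    gaussianReal_map_const_mul]
  simp
  rfl

lemma map_add_indep {Ω : Type*} [MeasurableSpace Ω] (P : Measure Ω) [IsProbabilityMeasure P]
    {X Y : Ω → ℝ} (hX : Measurable X) (hY : Measurable Y) (hind : IndepFun X Y P)
    {v w : ℝ≥0} (hXl : P.map X = gaussianReal 0 v) (hYl : P.map Y = gaussianReal 0 w) :
    P.map (fun ω => X ω + Y ω) = gaussianReal 0 (v + w) := by
  have hprod := (indepFun_iff_map_prod_eq_prod_map_map hX.aemeasurable hY.aemeasurable).mp hind
  have h : (fun ω => X ω + Y ω)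
      = (fun p : ℝ × ℝ => p.1 + p.2) ∘ (fun ω => (X ω, Y ω)) := rfl
  rw [h, ← Measure.map_map measurable_add (hX.prodMk hY), hprod, hXl, hYl,
    gaussianReal_conv]


end EOFCAux

open MeasureTheory ProbabilityTheory

/-- The `d = 2` case of the Gaussian extended one-factor copula proposition: with
independent standard Gaussians `Z₀, W₁, E`, `W₂ = ρW₁ + √(1−ρ²)E`,
`Xᵢ = ΔᵢZ₀ + √(1−Δᵢ²)Wᵢ` and `r = ρ√(1−Δ₁²)√(1−Δ₂²) + Δ₁Δ₂`, every linear combination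
`aX₁ + bX₂` has law `N(0, a² + b² + 2abr)`; in particular each `Xᵢ` is standard
Gaussian and `(X₁, X₂)` is bivariate Gaussian with correlation `r`, so the EOFC with
Gaussian linking copulas of correlations `Δ₁, Δ₂` and inner Gaussian copula of
correlation `ρ` is the Gaussian copula with correlation `r`. -/
theorem eofc_gaussian (Ω : Type*) [MeasurableSpace Ω] (P : Measure Ω)
    [IsProbabilityMeasure P] (Z₀ W₁ E : Ω → ℝ)
    (hZ₀ : Measurable Z₀) (hW₁ : Measurable W₁) (hE : Measurable E)
    (hindep : iIndepFun ![Z₀, W₁, E] P)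
    (hZ₀law : P.map Z₀ = gaussianReal 0 1)
    (hW₁law : P.map W₁ = gaussianReal 0 1)
    (hElaw : P.map E = gaussianReal 0 1)
    (ρ Δ₁ Δ₂ : ℝ) (hρ : ρ ∈ Set.Icc (-1:ℝ) 1)
    (hΔ₁ : Δ₁ ∈ Set.Icc (-1:ℝ) 1) (hΔ₂ : Δ₂ ∈ Set.Icc (-1:ℝ) 1)
    (W₂ X₁ X₂ : Ω → ℝ) (r : ℝ)
    (hW₂ : ∀ ω, W₂ ω = ρ * W₁ ω + Real.sqrt (1 - ρ ^ 2) * E ω)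
    (hX₁ : ∀ ω, X₁ ω = Δ₁ * Z₀ ω + Real.sqrt (1 - Δ₁ ^ 2) * W₁ ω)
    (hX₂ : ∀ ω, X₂ ω = Δ₂ * Z₀ ω + Real.sqrt (1 - Δ₂ ^ 2) * W₂ ω)
    (hr : r = ρ * Real.sqrt (1 - Δ₁ ^ 2) * Real.sqrt (1 - Δ₂ ^ 2) + Δ₁ * Δ₂) :
    ∀ a b : ℝ,
      P.map (fun ω => a * X₁ ω + b * X₂ ω)
        = gaussianReal 0 ((a ^ 2 + b ^ 2 + 2 * a * b * r).toNNReal) := by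
  intro a b
  have h1 : Real.sqrt (1 - Δ₁ ^ 2) ^ 2 = 1 - Δ₁ ^ 2 :=
    Real.sq_sqrt (by nlinarith [hΔ₁.1, hΔ₁.2])
  have h2 : Real.sqrt (1 - Δ₂ ^ 2) ^ 2 = 1 - Δ₂ ^ 2 :=
    Real.sq_sqrt (by nlinarith [hΔ₂.1, hΔ₂.2])
  have h3 : Real.sqrt (1 - ρ ^ 2) ^ 2 = 1 - ρ ^ 2 :=
    Real.sq_sqrt (by nlinarith [hρ.1, hρ.2])
  set s₁ : ℝ := Real.sqrt (1 - Δ₁ ^ 2) with hs₁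
  set s₂ : ℝ := Real.sqrt (1 - Δ₂ ^ 2) with hs₂
  set t : ℝ := Real.sqrt (1 - ρ ^ 2) with ht
  set c₀ : ℝ := a * Δ₁ + b * Δ₂ with hc₀
  set c₁ : ℝ := a * s₁ + b * (ρ * s₂) with hc₁
  set c₂ : ℝ := b * (s₂ * t) with hc₂
  have hmeas : ∀ i, Measurable (![Z₀, W₁, E] i) := by
    intro i
    fin_cases i
    · exact hZ₀
    · exact hW₁
    · exact hE
  have hindWE : IndepFun (fun ω => c₁ * W₁ ω) (fun ω => c₂ * E ω) P := by
    have h := hindep.indepFun (show (1 : Fin 3) ≠ 2 by decide)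
    exact h.comp ((by fun_prop : Measurable fun x : ℝ => c₁ * x)) ((by fun_prop : Measurable fun x : ℝ => c₂ * x))
  have hindZ : IndepFun (fun ω => c₀ * Z₀ ω) (fun ω => c₁ * W₁ ω + c₂ * E ω) P := by
    have h := (hindep.indepFun_prodMk hmeas 1 2 0 (by decide) (by decide)).symm
    exact h.comp ((by fun_prop : Measurable fun x : ℝ => c₀ * x))
      (show Measurable fun p : ℝ × ℝ => c₁ * p.1 + c₂ * p.2 by fun_prop)
  have law1 : P.map (fun ω => c₁ * W₁ ω + c₂ * E ω)
      = gaussianReal 0 (⟨c₁ ^ 2, sq_nonneg c₁⟩ + ⟨c₂ ^ 2, sq_nonneg c₂⟩) :=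
    EOFCAux.map_add_indep P (hW₁.const_mul c₁) (hE.const_mul c₂) hindWE
      (EOFCAux.map_const_mul P hW₁ hW₁law c₁) (EOFCAux.map_const_mul P hE hElaw c₂)
  have law2 : P.map (fun ω => c₀ * Z₀ ω + (c₁ * W₁ ω + c₂ * E ω))
      = gaussianReal 0 (⟨c₀ ^ 2, sq_nonneg c₀⟩ + (⟨c₁ ^ 2, sq_nonneg c₁⟩ + ⟨c₂ ^ 2, sq_nonneg c₂⟩)) :=
    EOFCAux.map_add_indep P (hZ₀.const_mul c₀) ((hW₁.const_mul c₁).add (hE.const_mul c₂)) hindZ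
      (EOFCAux.map_const_mul P hZ₀ hZ₀law c₀) law1
  have hfun : (fun ω => a * X₁ ω + b * X₂ ω)
      = fun ω => c₀ * Z₀ ω + (c₁ * W₁ ω + c₂ * E ω) := by
    funext ω
    rw [hX₁, hX₂, hW₂, hc₀, hc₁, hc₂]
    ring
  rw [hfun, law2]
  congr 1
  have hvar : a ^ 2 + b ^ 2 + 2 * a * b * r = c₀ ^ 2 + (c₁ ^ 2 + c₂ ^ 2) := by
    rw [hr, hc₀, hc₁, hc₂]
    linear_combination (-(a ^ 2)) * h1 + (-(b ^ 2)) * h2 + (-(b ^ 2 * s₂ ^ 2)) * h3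
  have hnn : 0 ≤ a ^ 2 + b ^ 2 + 2 * a * b * r := by rw [hvar]; positivity
  apply NNReal.coe_injective
  push_cast
  rw [Real.coe_toNNReal _ hnn, hvar]
  rfl
end
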